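/- arXiv:1910.00168 — 11 statements merged into one kernel-verified Lean document; each statement's English description precedes it below -/
import Mathlib

section
/- For a finite simple graph G, a set of vertices S is an ℓ-forcing set if and only if S intersects every ℓ-forcing fort of G. -/
open SimpleGraph

/-- The set of vertices that eventually become colored in the leaky zero forcing process
on graph `G` with leaks `L` and initially colored set `S`. -/
inductive SimpleGraph.LeakyForces {V : Type*} (G : SimpleGraph V) (L S : Set V) : V → Prop
  | init (v : V) (hv : v ∈ S) : SimpleGraph.LeakyForces G L S v
  | force (u v : V) (hu : u ∉ L) (hcu : SimpleGraph.LeakyForces G L S u) (huv : G.Adj u v)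
      (hall : ∀ w, G.Adj u w → w ≠ v → SimpleGraph.LeakyForces G L S w) :
      SimpleGraph.LeakyForces G L S v

/-- `S` is an `ℓ`-forcing set: for every placement of (at most) `ℓ` leaks, starting from `S`
colored, every vertex eventually becomes colored. -/
def SimpleGraph.IsLeakyForcingSet {V : Type*} (G : SimpleGraph V) (ℓ : ℕ) (S : Set V) : Prop :=
  ∀ L : Finset V, L.card ≤ ℓ → ∀ v, G.LeakyForces ↑L S v

/-- The `ℓ`-forcing number `Z_{(ℓ)}(G)`: minimum size of an `ℓ`-forcing set. -/
noncomputable def SimpleGraph.leakyForcingNumber {V : Type*} (G : SimpleGraph V) (ℓ : ℕ) : ℕ :=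
  sInf {k | ∃ S : Finset V, S.card = k ∧ G.IsLeakyForcingSet ℓ ↑S}

/-- An ℓ-forcing fort: a nonempty set of vertices that is exactly the set of uncolored
vertices after exhaustively forcing from some initial set with some placement of ℓ leaks. -/
def SimpleGraph.IsLeakyFort {V : Type*} (G : SimpleGraph V) (ℓ : ℕ) (T : Set V) : Prop :=
  T.Nonempty ∧ ∃ (S : Set V) (L : Finset V), L.card ≤ ℓ ∧
    T = {v | ¬ G.LeakyForces ↑L S v}

namespace SimpleGraph

variable {V : Type*} {G : SimpleGraph V}

theorem LeakyForces.of_subset_setOf {L S S' : Set V} (h : S ⊆ {s | G.LeakyForces L S' s})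
    {v : V} (hv : G.LeakyForces L S v) : G.LeakyForces L S' v := by
  induction hv with
  | init v hv => exact h hv
  | force u v hu _ huv _ ihu ihall => exact .force u v hu ihu huv ihall

theorem isLeakyFort_setOf_not_leakyForces {ℓ : ℕ} {S : Set V} {L : Finset V} (hL : L.card ≤ ℓ)
    {v : V} (hv : ¬ G.LeakyForces L S v) : G.IsLeakyFort ℓ {w | ¬ G.LeakyForces L S w} :=
  ⟨⟨v, hv⟩, S, L, hL, rfl⟩

end SimpleGraph

theorem leaky_forcing_iff_meets_every_fort_general {V : Type*} (G : SimpleGraph V)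
    (ℓ : ℕ) (S : Set V) :
    G.IsLeakyForcingSet ℓ S ↔ ∀ T : Set V, G.IsLeakyFort ℓ T → (S ∩ T).Nonempty := by
  constructor
  · rintro hS T ⟨⟨t, ht⟩, S', L, hL, rfl⟩
    by_contra hdisjoint
    have hforced : S ⊆ {s | G.LeakyForces L S' s} := fun s hs =>
      by_contra fun hc => hdisjoint ⟨s, hs, hc⟩
    exact ht ((hS L hL t).of_subset_setOf hforced)
  · intro h L hL v
    by_contra hv
    obtain ⟨s, hs, hsT⟩ := h _ (isLeakyFort_setOf_not_leakyForces hL hv)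
    exact hsT (.init s hs)

theorem leaky_forcing_iff_meets_every_fort {V : Type*} [Fintype V] (G : SimpleGraph V)
    (ℓ : ℕ) (S : Set V) :
    G.IsLeakyForcingSet ℓ S ↔ ∀ T : Set V, G.IsLeakyFort ℓ T → (S ∩ T).Nonempty :=
  leaky_forcing_iff_meets_every_fort_general G ℓ S
end

section
/- For n ≥ 2 and any ℓ ≥ 2, the ℓ-forcing number of the path P_n equals n; i.e., every vertex must be initially colored. -/
open SimpleGraph

/-! If every vertex has at most `ℓ` neighbours, then placing leaks on all neighbours of an
uncolored vertex `v` leaves nobody able to force `v`, so an `ℓ`-forcing set must contain every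
vertex. The path has maximum degree `2`. -/

namespace SimpleGraph

variable {V : Type*} {G : SimpleGraph V}

theorem LeakyForces.mem_of_neighborSet_subset {L S : Set V} {v : V} (h : G.LeakyForces L S v)
    (hL : G.neighborSet v ⊆ L) : v ∈ S := by
  cases h with
  | init _ hv => exact hv
  | force u _ hu _ huv _ => exact absurd (hL huv.symm) hu

theorem IsLeakyForcingSet.mem {ℓ : ℕ} {S : Set V} (hS : G.IsLeakyForcingSet ℓ S) (v : V)
    [Fintype (G.neighborSet v)] (hv : G.degree v ≤ ℓ) : v ∈ S :=
  (hS (G.neighborFinset v) (by rwa [card_neighborFinset_eq_degree]) v).mem_of_neighborSet_subset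
    (by rw [coe_neighborFinset])

theorem isLeakyForcingSet_univ (ℓ : ℕ) : G.IsLeakyForcingSet ℓ Set.univ :=
  fun _ _ v => .init v (Set.mem_univ v)

theorem leakyForcingNumber_eq_card_of_forall_degree_le [Fintype V] [G.LocallyFinite] {ℓ : ℕ}
    (h : ∀ v, G.degree v ≤ ℓ) : G.leakyForcingNumber ℓ = Fintype.card V := by
  have hsizes : {k | ∃ S : Finset V, S.card = k ∧ G.IsLeakyForcingSet ℓ ↑S} =
      {Fintype.card V} := by
    ext k
    constructor
    · rintro ⟨S, rfl, hS⟩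
      rw [Finset.eq_univ_of_forall fun v => hS.mem v (h v), Finset.card_univ]
      rfl
    · rintro rfl
      exact ⟨Finset.univ, Finset.card_univ, by simpa using G.isLeakyForcingSet_univ ℓ⟩
  rw [leakyForcingNumber, hsizes, csInf_singleton]

theorem pathGraph_degree_le_two {n : ℕ} (v : Fin n) [Fintype ((pathGraph n).neighborSet v)] :
    (pathGraph n).degree v ≤ 2 := by
  rw [← card_neighborFinset_eq_degree]
  calc ((pathGraph n).neighborFinset v).card
      _ ≤ ({v.val - 1, v.val + 1} : Finset ℕ).card := by
        refine Finset.card_le_card_of_injOn Fin.val (fun u hu => ?_) Fin.val_injective.injOn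
        rw [Finset.mem_coe, mem_neighborFinset, pathGraph_adj] at hu
        simp only [Finset.coe_insert, Finset.coe_singleton, Set.mem_insert_iff,
          Set.mem_singleton_iff]
        omega
      _ ≤ 2 := Finset.card_le_two

end SimpleGraph

theorem path_ell_forcing_general (n : ℕ) (ℓ : ℕ) (hℓ : 2 ≤ ℓ) :
    (SimpleGraph.pathGraph n).leakyForcingNumber ℓ = n := by
  classical
  rw [leakyForcingNumber_eq_card_of_forall_degree_le fun v => (pathGraph_degree_le_two v).trans hℓ,
    Fintype.card_fin]

theorem path_ell_forcing (n : ℕ) (hn : 2 ≤ n) (ℓ : ℕ) (hℓ : 2 ≤ ℓ) :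
    (SimpleGraph.pathGraph n).leakyForcingNumber ℓ = n :=
  path_ell_forcing_general n ℓ hℓ
end

section
/- Let T be a finite tree with t ≥ 2 leaves. Then any set consisting of t − 1 of the leaves of T is a zero forcing set (0-forcing set) of T. -/
open SimpleGraph

/-!
Root the tree at the excluded leaf `r` and let a vertex's level be its distance to `r`. Every
vertex other than `r` has exactly one neighbour one level closer to `r`, so a vertex `x` outside
the colored set, being `r` or a vertex of degree at least two, has a neighbour `c` one level
farther out, all of whose other neighbours are farther out still. Coloring from the outermost
level inwards, `c` and those neighbours are colored before `x`, and then `c` forces `x`.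
-/

namespace SimpleGraph

variable {V : Type*} {G : SimpleGraph V}

theorem LeakyForces.of_potential [Finite V] {L S : Set V} (f : V → ℕ)
    (h : ∀ x ∉ S, ∃ c ∉ L, G.Adj c x ∧ f x < f c ∧ ∀ w, G.Adj c w → w ≠ x → f x < f w)
    (x : V) : G.LeakyForces L S x := by
  induction x using (Finite.wellFounded_of_trans_of_irrefl fun a b : V => f b < f a).induction
    with | _ x ih
  by_cases hx : x ∈ S
  · exact .init x hx
  obtain ⟨c, hcL, hcx, hxc, hw⟩ := h x hx
  exact .force c x hcL (ih c hxc) hcx fun w hcw hwx => ih w (hw w hcw hwx)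

namespace IsTree

variable (hT : G.IsTree) (r : V)
include hT

theorem eq_of_adj_of_dist_add_one_eq {x a b : V} (ha : G.Adj a x) (hb : G.Adj b x)
    (hda : G.dist r a + 1 = G.dist r x) (hdb : G.dist r b + 1 = G.dist r x) : a = b := by
  obtain ⟨p, hp⟩ := hT.connected.exists_walk_length_eq_dist r a
  obtain ⟨q, hq⟩ := hT.connected.exists_walk_length_eq_dist r b
  have hpx : (p.concat ha).IsPath := (p.concat ha).isPath_of_length_eq_dist (by simp [hp, hda])
  have hqx : (q.concat hb).IsPath := (q.concat hb).isPath_of_length_eq_dist (by simp [hq, hdb])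
  have hpq := (hT.isAcyclic.subsingleton_path r x).elim ⟨_, hpx⟩ ⟨_, hqx⟩
  simpa using congrArg (fun P : G.Path r x => P.1.penultimate) hpq

theorem dist_eq_add_one_of_adj_of_ne {x c w : V} (hxc : G.Adj x c)
    (hc : G.dist r c = G.dist r x + 1) (hcw : G.Adj c w) (hwx : w ≠ x) :
    G.dist r w = G.dist r c + 1 := by
  refine (hT.dist_eq_dist_add_one_of_adj r hcw).resolve_left fun hwc => hwx ?_
  exact hT.eq_of_adj_of_dist_add_one_eq r hcw.symm hxc hwc.symm hc.symm

theorem exists_adj_dist_eq_add_one_of_one_lt_degree {x : V} [Fintype (G.neighborSet x)]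
    (hx : 1 < G.degree x) : ∃ c, G.Adj x c ∧ G.dist r c = G.dist r x + 1 := by
  rw [← card_neighborFinset_eq_degree, Finset.one_lt_card] at hx
  obtain ⟨a, ha, b, hb, hab⟩ := hx
  rw [mem_neighborFinset] at ha hb
  by_contra! h
  have hxa := (hT.dist_eq_dist_add_one_of_adj r ha).resolve_right (h a ha)
  have hxb := (hT.dist_eq_dist_add_one_of_adj r hb).resolve_right (h b hb)
  exact hab (hT.eq_of_adj_of_dist_add_one_eq r ha.symm hb.symm hxa.symm hxb.symm)

theorem leakyForces_degree_eq_one_diff_singleton [Fintype V] [DecidableRel G.Adj]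
    (hr : 0 < G.degree r) (y : V) : G.LeakyForces ∅ ({w | G.degree w = 1} \ {r}) y := by
  refine LeakyForces.of_potential (G.dist r) (fun x hx => ?_) y
  obtain ⟨c, hxc, hc⟩ : ∃ c, G.Adj x c ∧ G.dist r c = G.dist r x + 1 := by
    by_cases hxr : x = r
    · obtain ⟨c, hrc⟩ := (G.degree_pos_iff_exists_adj r).mp hr
      exact ⟨c, hxr ▸ hrc, by simp [hxr, dist_eq_one_iff_adj.mpr hrc]⟩
    · have : Nontrivial V := nontrivial_of_ne x r hxr
      have hpos := hT.connected.preconnected.degree_pos_of_nontrivial x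
      have hne : G.degree x ≠ 1 := fun h => hx ⟨h, hxr⟩
      exact hT.exists_adj_dist_eq_add_one_of_one_lt_degree r (by omega)
  refine ⟨c, Set.notMem_empty c, hxc.symm, by omega, fun w hcw hwx => ?_⟩
  have := hT.dist_eq_add_one_of_adj_of_ne r hxc hc hcw hwx
  omega

end IsTree

end SimpleGraph

theorem tree_all_but_one_leaf_zero_forcing_general {V : Type*} [Fintype V]
    (G : SimpleGraph V) [DecidableRel G.Adj] (hT : G.IsTree)
    (v : V) (hv : G.degree v = 1) :
    G.IsLeakyForcingSet 0 ({w | G.degree w = 1} \ {v}) := by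
  intro L hL
  rw [Finset.card_eq_zero.mp (Nat.le_zero.mp hL), Finset.coe_empty]
  exact hT.leakyForces_degree_eq_one_diff_singleton v (hv ▸ Nat.one_pos)

theorem tree_all_but_one_leaf_zero_forcing {V : Type*} [Fintype V]
    (G : SimpleGraph V) [DecidableRel G.Adj] (hT : G.IsTree)
    (ht : 2 ≤ {v | G.degree v = 1}.ncard)
    (v : V) (hv : G.degree v = 1) :
    G.IsLeakyForcingSet 0 ({w | G.degree w = 1} \ {v}) :=
  tree_all_but_one_leaf_zero_forcing_general G hT v hv
end

section
/- For the cycle C_n (n ≥ 3), the 1-forcing number equals 2; in fact any pair of adjacent vertices forms a 1-forcing set. -/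
open SimpleGraph

/-! With a single leak `l`, the adjacent pair `{u, u + 1}` starts two forcing runs around the
cycle: `u + 1` forces forward and `u` forces backward, each run stopping only after coloring `l`,
so together they cover the whole cycle. Conversely, a set `S` with `|S| ≤ ℓ` is not `ℓ`-forcing
unless it is everything: leak every vertex of `S`, and nothing is ever forced. -/

open Fin.CommRing Fin.NatCast

namespace SimpleGraph

variable {V : Type*} {G : SimpleGraph V}

theorem LeakyForces.mem_of_subset_leaks {L S : Set V} (hSL : S ⊆ L) {v : V}
    (h : G.LeakyForces L S v) : v ∈ S := by
  induction h with
  | init v hv => exact hv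
  | force _ _ hu _ _ _ ih _ => exact absurd (hSL ih) hu

theorem leakyForcingNumber_le {ℓ : ℕ} {S : Finset V} (hS : G.IsLeakyForcingSet ℓ S) :
    G.leakyForcingNumber ℓ ≤ S.card :=
  Nat.sInf_le ⟨S, rfl, hS⟩

theorem lt_leakyForcingNumber [Fintype V] {ℓ : ℕ} (hℓ : ℓ < Fintype.card V)
    (hex : ∃ S : Finset V, G.IsLeakyForcingSet ℓ S) : ℓ < G.leakyForcingNumber ℓ := by
  obtain ⟨S, hS⟩ := hex
  obtain ⟨T, hcard, hT⟩ := Nat.sInf_mem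
    (s := {k | ∃ S : Finset V, S.card = k ∧ G.IsLeakyForcingSet ℓ ↑S}) ⟨_, S, rfl, hS⟩
  by_contra! hle
  rw [leakyForcingNumber, ← hcard] at hle
  obtain ⟨v, -, hv⟩ := Finset.exists_mem_notMem_of_card_lt_card (s := T) (t := Finset.univ)
    (by rw [Finset.card_univ]; omega)
  exact hv ((hT T hle v).mem_of_subset_leaks le_rfl)

section Cycle

variable {n : ℕ} {L S : Set (Fin (n + 2))} {d : Fin (n + 2)}

theorem cycleGraph_adj_iff_eq_add_or_eq_sub (hd : d = 1 ∨ d = -1) {a b : Fin (n + 2)} :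
    (cycleGraph (n + 2)).Adj a b ↔ b = a + d ∨ b = a - d := by
  rw [← mem_neighborSet, cycleGraph_neighborSet, Set.mem_insert_iff, Set.mem_singleton_iff]
  rcases hd with rfl | rfl
  · exact or_comm
  · rw [sub_neg_eq_add, ← sub_eq_add_neg]

theorem LeakyForces.cycleGraph_step {a : Fin (n + 2)}
    (h : (cycleGraph (n + 2)).LeakyForces L S a) (hd : d = 1 ∨ d = -1) (ha : a ∉ L)
    (hprev : (cycleGraph (n + 2)).LeakyForces L S (a - d)) :
    (cycleGraph (n + 2)).LeakyForces L S (a + d) :=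
  .force a _ ha h ((cycleGraph_adj_iff_eq_add_or_eq_sub hd).2 (.inl rfl)) fun _ hw hne =>
    ((cycleGraph_adj_iff_eq_add_or_eq_sub hd).1 hw).resolve_left hne ▸ hprev

theorem LeakyForces.cycleGraph_run (hd : d = 1 ∨ d = -1) {a : Fin (n + 2)} {k : ℕ}
    (h₀ : (cycleGraph (n + 2)).LeakyForces L S a)
    (h₁ : (cycleGraph (n + 2)).LeakyForces L S (a + d))
    (hL : ∀ j : ℕ, 0 < j → j ≤ k → a + j * d ∉ L) :
    ∀ j ≤ k + 1, (cycleGraph (n + 2)).LeakyForces L S (a + j * d) := by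
  have hpair : ∀ j ≤ k, (cycleGraph (n + 2)).LeakyForces L S (a + j * d) ∧
      (cycleGraph (n + 2)).LeakyForces L S (a + (j + 1 : ℕ) * d) := by
    intro j hj
    induction j with
    | zero => simpa using And.intro h₀ h₁
    | succ j ih =>
      obtain ⟨hj₀, hj₁⟩ := ih (by omega)
      refine ⟨hj₁, ?_⟩
      have := hj₁.cycleGraph_step hd (hL (j + 1) (by omega) hj)
        (by convert hj₀ using 1; push_cast; ring)
      convert this using 1; push_cast; ring
  intro j hj
  rcases hj.lt_or_eq with hj | rfl
  · exact (hpair j (by omega)).1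
  · exact (hpair k le_rfl).2

theorem cycleGraph_isLeakyForcingSet_one_pair (u : Fin (n + 2)) :
    (cycleGraph (n + 2)).IsLeakyForcingSet 1 {u, u + 1} := by
  intro L hL v
  obtain ⟨l, hl⟩ := Finset.card_le_one_iff_subset_singleton.1 hL
  have hleak : ∀ x ∈ (L : Set (Fin (n + 2))), x = l := fun x hx => Finset.mem_singleton.1 (hl hx)
  have hu : (cycleGraph (n + 2)).LeakyForces L {u, u + 1} u := .init _ (by simp)
  have hu₁ : (cycleGraph (n + 2)).LeakyForces L {u, u + 1} (u + 1) := .init _ (by simp)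
  have hcast_ne_zero : ∀ m : ℕ, 0 < m → m < n + 2 → (m : Fin (n + 2)) ≠ 0 := fun m h0 hm h =>
    h0.ne' (Nat.eq_zero_of_dvd_of_lt (Fin.natCast_eq_zero.1 h) hm)
  obtain ⟨q, hq, rfl⟩ : ∃ q < n + 2, l = u + 1 + q := ⟨(l - (u + 1)).val, Fin.is_lt _, by simp⟩
  obtain ⟨r, hr, rfl⟩ : ∃ r < n + 2, v = u + 1 + r := ⟨(v - (u + 1)).val, Fin.is_lt _, by simp⟩
  -- The forward run from `u` has forcers `u + 1, …, u + q`; the backward run from `u + 1` has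
  -- forcers `u, u - 1, …, u + 1 + (q + 1)`. Neither meets the leak `u + 1 + q`.
  rcases le_total r q with hrq | hqr
  · convert hu.cycleGraph_run (.inl rfl) hu₁ (k := q) (fun j hj hjq hjL => ?_) (r + 1) (by omega)
      using 1
    · push_cast; ring
    · refine hcast_ne_zero (q + 1 - j) (by omega) (by omega) ?_
      push_cast [Nat.cast_sub (by omega : j ≤ q + 1)]
      linear_combination -hleak _ hjL
  · have hv : u + 1 + (r : Fin (n + 2)) = u + 1 + ((n + 2 - r : ℕ) : Fin (n + 2)) * -1 := by
      have hzero : ((n + 2 : ℕ) : Fin (n + 2)) = 0 := Fin.natCast_self _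
      push_cast [Nat.cast_sub hr.le] at hzero ⊢
      linear_combination hzero
    rw [hv]
    refine hu₁.cycleGraph_run (.inr rfl) (by simpa using hu) (k := n + 1 - q)
      (fun j hj hjq hjL => ?_) _ (by omega)
    refine hcast_ne_zero (j + q) (by omega) (by omega) ?_
    push_cast
    linear_combination -hleak _ hjL

theorem cycleGraph_isLeakyForcingSet_one_of_adj {u v : Fin (n + 2)}
    (h : (cycleGraph (n + 2)).Adj u v) : (cycleGraph (n + 2)).IsLeakyForcingSet 1 {u, v} := by
  rcases (cycleGraph_adj_iff_eq_add_or_eq_sub (.inl rfl)).1 h with rfl | rfl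
  · exact cycleGraph_isLeakyForcingSet_one_pair u
  · rw [Set.pair_comm]
    convert cycleGraph_isLeakyForcingSet_one_pair (u - 1)
    ring

end Cycle

end SimpleGraph

theorem cycle_one_forcing (n : ℕ) (hn : 3 ≤ n) :
    (SimpleGraph.cycleGraph n).leakyForcingNumber 1 = 2 ∧
    ∀ u v : Fin n, (SimpleGraph.cycleGraph n).Adj u v →
      (SimpleGraph.cycleGraph n).IsLeakyForcingSet 1 {u, v} := by
  obtain ⟨m, rfl⟩ : ∃ m, n = m + 2 := ⟨n - 2, by omega⟩
  have hadj : (cycleGraph (m + 2)).Adj 0 1 :=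
    (cycleGraph_adj_iff_eq_add_or_eq_sub (.inl rfl)).2 (.inl (zero_add 1).symm)
  have hpair : (cycleGraph (m + 2)).IsLeakyForcingSet 1 ↑({0, 1} : Finset (Fin (m + 2))) := by
    simpa using cycleGraph_isLeakyForcingSet_one_of_adj hadj
  refine ⟨le_antisymm ?_ (lt_leakyForcingNumber (by simp) ⟨_, hpair⟩),
    fun _ _ => cycleGraph_isLeakyForcingSet_one_of_adj⟩
  simpa using leakyForcingNumber_le hpair
end

section
/- For the wheel graph W_n (n ≥ 4) with one leak, the set consisting of the hub vertex and two adjacent rim vertices is a 1-forcing set, so Z_{(1)}(W_n) ≤ 3. -/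
open SimpleGraph

/-- The wheel graph `W_n`: a cycle `C_n` (the rim, vertices `some i`) together with a
hub vertex (`none`) adjacent to every rim vertex. -/
def wheelGraph (n : ℕ) : SimpleGraph (Option (Fin n)) where
  Adj u v :=
    (u = none ∧ v ≠ none) ∨ (v = none ∧ u ≠ none) ∨
      (∃ i j, u = some i ∧ v = some j ∧ (SimpleGraph.cycleGraph n).Adj i j)
  symm := by
    constructor
    rintro u v (⟨h1, h2⟩ | ⟨h1, h2⟩ | ⟨i, j, h1, h2, h3⟩)
    · exact Or.inr (Or.inl ⟨h1, h2⟩)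
    · exact Or.inl ⟨h1, h2⟩
    · exact Or.inr (Or.inr ⟨j, i, h2, h1, h3.symm⟩)
  loopless := by
    constructor
    rintro u (⟨h1, h2⟩ | ⟨h1, h2⟩ | ⟨i, j, h1, h2, h3⟩)
    · exact h2 h1
    · exact h2 h1
    · rw [h1] at h2
      cases h2
      exact (SimpleGraph.irrefl _) h3

/-! The hub is colored from the start. An unleaked rim vertex `x` that is colored, together with
the hub and one of its rim neighbours, forces its other rim neighbour. With at most one leak, every
rim vertex other than some `ℓ` can force, so reading the rim as the path `ℓ, ℓ + 1, …, ℓ + n = ℓ`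
the coloring spreads in both directions from the consecutive pair `a, a + 1` to both ends. -/

open Fin.CommRing

theorem Nat.forall_le_of_spread_from_pair {C : ℕ → Prop} {N p : ℕ} (hp : p < N)
    (hCp : C p) (hCp' : C (p + 1))
    (fwd : ∀ j, j + 1 < N → C j → C (j + 1) → C (j + 2))
    (bwd : ∀ j, j + 1 < N → C (j + 2) → C (j + 1) → C j) :
    ∀ i ≤ N, C i := by
  have up : ∀ i, p ≤ i → i < N → C i ∧ C (i + 1) := by
    intro i hpi
    induction i, hpi using Nat.le_induction with
    | base => exact fun _ => ⟨hCp, hCp'⟩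
    | succ i _ ih =>
      intro hi
      obtain ⟨hi₀, hi₁⟩ := ih (by omega)
      exact ⟨hi₁, fwd i hi hi₀ hi₁⟩
  have down : ∀ i ≤ p, C i ∧ C (i + 1) := by
    intro i hip
    induction hip using Nat.decreasingInduction with
    | self => exact ⟨hCp, hCp'⟩
    | of_succ i hi ih => exact ⟨bwd i (by omega) ih.2 ih.1, ih.1⟩
  intro i hi
  rcases le_or_gt i p with hip | hpi
  · exact (down i hip).1
  · obtain ⟨k, rfl⟩ : ∃ k, i = k + 1 := ⟨i - 1, by omega⟩
    exact (up k (by omega) (by omega)).2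

theorem wheelGraph_adj_some_iff {n : ℕ} {x : Fin (n + 2)} {w : Option (Fin (n + 2))} :
    (wheelGraph (n + 2)).Adj (some x) w ↔ w = none ∨ w = some (x - 1) ∨ w = some (x + 1) := by
  cases w with
  | none => simp [wheelGraph]
  | some y =>
    have := Set.ext_iff.mp (cycleGraph_neighborSet (v := x)) y
    simp_all [wheelGraph, mem_neighborSet]

theorem Finset.exists_forall_ne_some_notMem {α : Type*} [Nonempty α] {L : Finset (Option α)}
    (hL : L.card ≤ 1) : ∃ a : α, ∀ x ≠ a, some x ∉ L := by
  by_cases h : ∃ a, some a ∈ L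
  · obtain ⟨a, ha⟩ := h
    exact ⟨a, fun x hxa hx => hxa (Option.some_injective _ (Finset.card_le_one.mp hL _ hx _ ha))⟩
  · push Not at h
    exact ⟨Classical.arbitrary α, fun x _ => h x⟩

section LeakyForces

variable {n : ℕ} {L S : Set (Option (Fin (n + 2)))}

theorem wheelGraph_leakyForces_succ {x : Fin (n + 2)}
    (hub : (wheelGraph (n + 2)).LeakyForces L S none)
    (hxL : some x ∉ L) (hx : (wheelGraph (n + 2)).LeakyForces L S (some x))
    (hpred : (wheelGraph (n + 2)).LeakyForces L S (some (x - 1))) :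
    (wheelGraph (n + 2)).LeakyForces L S (some (x + 1)) := by
  refine .force _ _ hxL hx (wheelGraph_adj_some_iff.mpr (by simp)) fun w hw hne => ?_
  rcases wheelGraph_adj_some_iff.mp hw with rfl | rfl | rfl
  exacts [hub, hpred, absurd rfl hne]

theorem wheelGraph_leakyForces_pred {x : Fin (n + 2)}
    (hub : (wheelGraph (n + 2)).LeakyForces L S none)
    (hxL : some x ∉ L) (hx : (wheelGraph (n + 2)).LeakyForces L S (some x))
    (hsucc : (wheelGraph (n + 2)).LeakyForces L S (some (x + 1))) :
    (wheelGraph (n + 2)).LeakyForces L S (some (x - 1)) := by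
  refine .force _ _ hxL hx (wheelGraph_adj_some_iff.mpr (by simp)) fun w hw hne => ?_
  rcases wheelGraph_adj_some_iff.mp hw with rfl | rfl | rfl
  exacts [hub, absurd rfl hne, hsucc]

theorem wheelGraph_leakyForces_some (hub : (wheelGraph (n + 2)).LeakyForces L S none)
    {ℓ : Fin (n + 2)} (hL : ∀ y ≠ ℓ, some y ∉ L) {a : Fin (n + 2)}
    (ha : (wheelGraph (n + 2)).LeakyForces L S (some a))
    (ha' : (wheelGraph (n + 2)).LeakyForces L S (some (a + 1))) (x : Fin (n + 2)) :
    (wheelGraph (n + 2)).LeakyForces L S (some x) := by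
  have unleaked : ∀ j, j + 1 < n + 2 → some (ℓ + ((j + 1 : ℕ) : Fin (n + 2))) ∉ L := by
    refine fun j hj => hL _ fun h => ?_
    have hdvd : n + 2 ∣ j + 1 := Fin.natCast_eq_zero.mp (add_eq_left.mp h)
    exact absurd (Nat.le_of_dvd j.succ_pos hdvd) (by omega)
  have shift : ∀ j : ℕ, ℓ + ((j + 2 : ℕ) : Fin (n + 2)) = ℓ + ((j + 1 : ℕ) : Fin (n + 2)) + 1 ∧
      ℓ + (j : Fin (n + 2)) = ℓ + ((j + 1 : ℕ) : Fin (n + 2)) - 1 :=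
    fun j => ⟨by push_cast; ring, by push_cast; ring⟩
  -- position `i` on the path is `ℓ + i`; position `n + 2` is `ℓ` again
  have spread := Nat.forall_le_of_spread_from_pair
    (C := fun i => (wheelGraph (n + 2)).LeakyForces L S (some (ℓ + (i : Fin (n + 2)))))
    (a - ℓ).isLt (by simpa using ha) (by simpa [← add_assoc] using ha')
    (fun j hj hj₀ hj₁ => by
      rw [(shift j).1]
      exact wheelGraph_leakyForces_succ hub (unleaked j hj) hj₁ ((shift j).2 ▸ hj₀))
    (fun j hj hj₂ hj₁ => by
      rw [(shift j).2]
      exact wheelGraph_leakyForces_pred hub (unleaked j hj) hj₁ ((shift j).1 ▸ hj₂))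
  simpa using spread (x - ℓ).val (x - ℓ).isLt.le

end LeakyForces

theorem wheelGraph_isLeakyForcingSet_one {n : ℕ} (a : Fin (n + 2)) :
    (wheelGraph (n + 2)).IsLeakyForcingSet 1 {none, some a, some (a + 1)} := by
  intro L hL v
  obtain ⟨ℓ, hℓ⟩ := Finset.exists_forall_ne_some_notMem hL
  have hub : (wheelGraph (n + 2)).LeakyForces L {none, some a, some (a + 1)} none :=
    .init _ (by simp)
  cases v with
  | none => exact hub
  | some x =>
    exact wheelGraph_leakyForces_some hub hℓ (a := a) (.init _ (by simp)) (.init _ (by simp)) x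

theorem wheel_hub_two_rim_one_forcing (n : ℕ) (hn : 4 ≤ n) :
    (∀ u v : Fin n, (SimpleGraph.cycleGraph n).Adj u v →
      (wheelGraph n).IsLeakyForcingSet 1 {none, some u, some v}) ∧
    (wheelGraph n).leakyForcingNumber 1 ≤ 3 := by
  obtain ⟨m, rfl⟩ : ∃ m, n = m + 2 := ⟨n - 2, by omega⟩
  refine ⟨fun u v huv => ?_, Nat.sInf_le ⟨{none, some 0, some 1}, by simp, ?_⟩⟩
  · rcases cycleGraph_adj.mp huv with h | h
    · rw [sub_eq_iff_eq_add'.mp h, Set.pair_comm]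
      exact wheelGraph_isLeakyForcingSet_one v
    · rw [sub_eq_iff_eq_add'.mp h]
      exact wheelGraph_isLeakyForcingSet_one u
  · simpa using wheelGraph_isLeakyForcingSet_one (0 : Fin (m + 2))
end

section
/- For the wheel graph W_n with n ≥ 4, the 2-forcing number of W_n equals ⌈2n/3⌉ + 1. -/
open SimpleGraph

/-
Upper bound: colour the hub and every rim vertex `i` with `i ≢ 2 (mod 3)`. An uncoloured rim
vertex `d` has coloured rim neighbours `d ± 1` whose other rim neighbours `d ± 2` are coloured
too, so either of them forces `d` unless it is a leak. If both are leaks, they are the only two,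
so every other uncoloured rim vertex is forced and then the hub forces `d`.

Lower bound: two uncoloured rim vertices at distance 1 or 2 form a fort once the two rim
vertices flanking them leak. Hence the closed rim neighbourhoods of the uncoloured rim vertices
are pairwise disjoint, and at most `n / 3` rim vertices are uncoloured. If the hub is uncoloured
too, at least three rim vertices lie outside these neighbourhoods: otherwise leaking them makes
the hub together with the uncoloured rim vertices a fort.
-/

open Finset

namespace SimpleGraph

variable {V : Type*} (G : SimpleGraph V)

def IsLeakyFort_s12 (L F : Set V) : Prop :=
  ∀ ⦃u v⦄, u ∉ F → u ∉ L → v ∈ F → G.Adj u v → ∃ w ∈ F, w ≠ v ∧ G.Adj u w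

variable {G}

theorem LeakyForces.notMem_of_isLeakyFort {L S F : Set V} (hF : G.IsLeakyFort_s12 L F)
    (hSF : Disjoint S F) {v : V} (hv : G.LeakyForces L S v) : v ∉ F := by
  induction hv with
  | init v hv => exact Set.disjoint_left.mp hSF hv
  | force u v hu _ huv _ ihu ihall =>
    intro hvF
    obtain ⟨w, hwF, hwv, huw⟩ := hF ihu hu hvF huv
    exact ihall w huw hwv hwF

theorem IsLeakyForcingSet.not_isLeakyFort {ℓ : ℕ} {S F : Set V}
    (hS : G.IsLeakyForcingSet ℓ S) {L : Finset V} (hL : L.card ≤ ℓ) (hF : F.Nonempty)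
    (hSF : Disjoint S F) : ¬G.IsLeakyFort_s12 L F := fun hfort =>
  let ⟨v, hv⟩ := hF
  (hS L hL v).notMem_of_isLeakyFort hfort hSF hv

theorem leakyForcingNumber_eq {ℓ k : ℕ} {S : Finset V} (hS : G.IsLeakyForcingSet ℓ S)
    (hcard : S.card = k) (hmin : ∀ T : Finset V, G.IsLeakyForcingSet ℓ T → k ≤ T.card) :
    G.leakyForcingNumber ℓ = k :=
  le_antisymm (Nat.sInf_le ⟨S, hcard, hS⟩)
    (le_csInf ⟨k, S, hcard, hS⟩ fun _ ⟨T, hT, hTS⟩ => hT ▸ hmin T hTS)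

end SimpleGraph

theorem Finset.card_image_sub_union_union_image_add {G : Type*} [AddGroup G] [DecidableEq G]
    {U : Finset G} {g : G} (hU : ∀ z ∈ U, z + g ∉ U ∧ z + g + g ∉ U) :
    (U.image (· - g) ∪ U ∪ U.image (· + g)).card = 3 * U.card := by
  have hpred : Disjoint (U.image (· - g)) U := by
    simp only [disjoint_left, mem_image]
    rintro _ ⟨z, hz, rfl⟩ hzU
    exact (hU _ hzU).1 (by rwa [sub_add_cancel])
  have hsucc : Disjoint (U.image (· - g) ∪ U) (U.image (· + g)) := by
    rw [disjoint_union_left]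
    simp only [disjoint_right, mem_image]
    constructor
    · rintro _ ⟨z, hz, rfl⟩ ⟨t, ht, htz⟩
      exact (hU z hz).2 (by rwa [← sub_eq_iff_eq_add.mp htz])
    · rintro _ ⟨z, hz, rfl⟩
      exact (hU z hz).1
  rw [card_union_of_disjoint hsucc, card_union_of_disjoint hpred,
    card_image_of_injective _ (sub_left_injective (b := g)),
    card_image_of_injective _ (add_left_injective g)]
  ring

theorem Fin.val_add_one_eq_ite {n : ℕ} [NeZero n] (hn : 2 ≤ n) (i : Fin n) :
    ((i + 1 : Fin n) : ℕ) = if n ≤ i + 1 then i + 1 - n else i + 1 := by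
  rw [Fin.val_add_eq_ite, Fin.val_one', Nat.mod_eq_of_lt hn]

theorem Fin.one_add_one_ne_zero {n : ℕ} [NeZero n] (hn : 3 ≤ n) : (1 + 1 : Fin n) ≠ 0 := by
  rw [Ne, Fin.ext_iff, Fin.val_add, Fin.val_one', Fin.val_zero, Nat.mod_eq_of_lt (by omega : 1 < n),
    Nat.mod_eq_of_lt (by omega : 1 + 1 < n)]
  omega

theorem SimpleGraph.cycleGraph_adj_iff {n : ℕ} [NeZero n] (hn : 2 ≤ n) {i j : Fin n} :
    (cycleGraph n).Adj i j ↔ j = i - 1 ∨ j = i + 1 := by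
  obtain ⟨k, rfl⟩ : ∃ k, n = k + 2 := ⟨n - 2, by omega⟩
  exact Set.ext_iff.mp cycleGraph_neighborSet j

section Wheel

variable {n : ℕ}

@[simp]
theorem wheelGraph_adj_none_left {v : Option (Fin n)} : (wheelGraph n).Adj none v ↔ v ≠ none := by
  simp [wheelGraph]

@[simp]
theorem wheelGraph_adj_none_right {v : Option (Fin n)} : (wheelGraph n).Adj v none ↔ v ≠ none :=
  ((wheelGraph n).adj_comm _ _).trans wheelGraph_adj_none_left

@[simp]
theorem wheelGraph_adj_some_some {i j : Fin n} :
    (wheelGraph n).Adj (some i) (some j) ↔ (cycleGraph n).Adj i j := by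
  simp [wheelGraph]

variable {L S : Set (Option (Fin n))}

theorem wheelGraph_leakyForces_of_hub (hhub : none ∉ L)
    (hnone : (wheelGraph n).LeakyForces L S none) {i : Fin n}
    (hrim : ∀ j ≠ i, (wheelGraph n).LeakyForces L S (some j)) :
    (wheelGraph n).LeakyForces L S (some i) :=
  .force none _ hhub hnone (by simp) fun w hw hne => by
    obtain ⟨j, rfl⟩ := Option.ne_none_iff_exists'.mp (wheelGraph_adj_none_left.mp hw)
    exact hrim j fun hji => hne (hji ▸ rfl)

theorem wheelGraph_isLeakyFort_insert_none {U : Set (Fin n)}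
    (hL : ∀ a ∉ U, some a ∉ L → ∃ z ∈ U, (cycleGraph n).Adj a z) :
    (wheelGraph n).IsLeakyFort_s12 L (insert none (some '' U)) := by
  rintro (_ | a) v hu hleak hv -
  · exact absurd (Set.mem_insert _ _) hu
  rcases hv with rfl | ⟨t, -, rfl⟩
  · obtain ⟨z, hz, haz⟩ := hL a (fun ha => hu (Set.mem_insert_of_mem _ ⟨a, ha, rfl⟩)) hleak
    exact ⟨some z, Set.mem_insert_of_mem _ ⟨z, hz, rfl⟩, by simp, by simpa using haz⟩
  · exact ⟨none, Set.mem_insert _ _, by simp, by simp⟩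

variable [NeZero n]

theorem wheelGraph_leakyForces_add_one (hn : 2 ≤ n) {i : Fin n} (hi : some i ∉ L)
    (h : (wheelGraph n).LeakyForces L S (some i)) (hnone : (wheelGraph n).LeakyForces L S none)
    (hpred : (wheelGraph n).LeakyForces L S (some (i - 1))) :
    (wheelGraph n).LeakyForces L S (some (i + 1)) := by
  refine .force _ _ hi h (by simp [cycleGraph_adj_iff hn]) ?_
  rintro (_ | j) hj hne
  · exact hnone
  rcases (cycleGraph_adj_iff hn).mp (wheelGraph_adj_some_some.mp hj) with rfl | rfl
  · exact hpred
  · exact absurd rfl hne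

theorem wheelGraph_leakyForces_sub_one (hn : 2 ≤ n) {i : Fin n} (hi : some i ∉ L)
    (h : (wheelGraph n).LeakyForces L S (some i)) (hnone : (wheelGraph n).LeakyForces L S none)
    (hsucc : (wheelGraph n).LeakyForces L S (some (i + 1))) :
    (wheelGraph n).LeakyForces L S (some (i - 1)) := by
  refine .force _ _ hi h (by simp [cycleGraph_adj_iff hn]) ?_
  rintro (_ | j) hj hne
  · exact hnone
  rcases (cycleGraph_adj_iff hn).mp (wheelGraph_adj_some_some.mp hj) with rfl | rfl
  · exact absurd rfl hne
  · exact hsucc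

end Wheel

def rimHoles (n : ℕ) : Finset (Fin n) := univ.filter fun i => 3 ∣ i.val + 1

def wheelForcingSet (n : ℕ) : Finset (Option (Fin n)) := (rimHoles n)ᶜ.insertNone

theorem card_rimHoles (n : ℕ) : (rimHoles n).card = n / 3 := by
  rw [← Nat.card_multiples, ← card_map Fin.valEmbedding]
  congr 1
  ext e
  simp only [rimHoles, mem_map, mem_filter, mem_univ, true_and, mem_range, Fin.valEmbedding_apply]
  exact ⟨fun ⟨i, hi, he⟩ => he ▸ ⟨i.isLt, hi⟩, fun ⟨he, h⟩ => ⟨⟨e, he⟩, h, rfl⟩⟩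

theorem card_wheelForcingSet (n : ℕ) : (wheelForcingSet n).card = (2 * n + 2) / 3 + 1 := by
  rw [wheelForcingSet, card_insertNone, card_compl, Fintype.card_fin, card_rimHoles]
  omega

section UpperBound

variable {n : ℕ} {L : Set (Option (Fin n))}

theorem leakyForces_wheelForcingSet_none :
    (wheelGraph n).LeakyForces L (wheelForcingSet n) none :=
  .init _ (by simp [wheelForcingSet])

theorem leakyForces_wheelForcingSet_of_notMem {i : Fin n} (hi : i ∉ rimHoles n) :
    (wheelGraph n).LeakyForces L (wheelForcingSet n) (some i) :=
  .init _ (by simpa [wheelForcingSet] using hi)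

variable [NeZero n]

theorem add_one_notMem_rimHoles (hn : 2 ≤ n) {d : Fin n} (hd : d ∈ rimHoles n) :
    d + 1 ∉ rimHoles n := by
  simp only [rimHoles, mem_filter, mem_univ, true_and] at hd ⊢
  rw [Fin.val_add_one_eq_ite hn]
  split_ifs <;> omega

theorem add_one_add_one_notMem_rimHoles (hn : 2 ≤ n) {d : Fin n} (hd : d ∈ rimHoles n) :
    d + 1 + 1 ∉ rimHoles n := by
  simp only [rimHoles, mem_filter, mem_univ, true_and] at hd ⊢
  rw [Fin.val_add_one_eq_ite hn, Fin.val_add_one_eq_ite hn d]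
  have := d.isLt
  split_ifs <;> omega

theorem leakyForces_wheelForcingSet_of_mem (hn : 2 ≤ n) {d : Fin n} (hd : d ∈ rimHoles n)
    (hleak : some (d - 1) ∉ L ∨ some (d + 1) ∉ L) :
    (wheelGraph n).LeakyForces L (wheelForcingSet n) (some d) := by
  rcases hleak with hleak | hleak
  · have hpred : d - 1 ∉ rimHoles n := fun h =>
      add_one_notMem_rimHoles hn h (by simpa using hd)
    have hpred' : d - 1 - 1 ∉ rimHoles n := fun h =>
      add_one_add_one_notMem_rimHoles hn h (by simpa using hd)
    simpa using wheelGraph_leakyForces_add_one hn hleak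
      (leakyForces_wheelForcingSet_of_notMem hpred) leakyForces_wheelForcingSet_none
      (leakyForces_wheelForcingSet_of_notMem hpred')
  · simpa using wheelGraph_leakyForces_sub_one hn hleak
      (leakyForces_wheelForcingSet_of_notMem (add_one_notMem_rimHoles hn hd))
      leakyForces_wheelForcingSet_none
      (leakyForces_wheelForcingSet_of_notMem (add_one_add_one_notMem_rimHoles hn hd))

theorem isLeakyForcingSet_wheelForcingSet (hn : 3 ≤ n) :
    (wheelGraph n).IsLeakyForcingSet 2 (wheelForcingSet n) := by
  intro L hL v
  rcases v with _ | d
  · exact leakyForces_wheelForcingSet_none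
  by_cases hd : d ∈ rimHoles n
  swap
  · exact leakyForces_wheelForcingSet_of_notMem hd
  by_cases hleak : some (d - 1) ∉ (L : Set _) ∨ some (d + 1) ∉ (L : Set _)
  · exact leakyForces_wheelForcingSet_of_mem (by omega) hd hleak
  have hL' : L = {some (d - 1), some (d + 1)} := by
    simp only [not_or, not_not, mem_coe] at hleak
    refine (eq_of_subset_of_card_le (insert_subset_iff.mpr ⟨hleak.1, by simpa using hleak.2⟩)
      (hL.trans_eq (card_pair ?_).symm)).symm
    intro h
    apply Fin.one_add_one_ne_zero hn
    calc (1 + 1 : Fin n) = d + 1 - (d - 1) := by abel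
      _ = 0 := sub_eq_zero.mpr (Option.some_inj.mp h).symm
  refine wheelGraph_leakyForces_of_hub (by simp [hL']) leakyForces_wheelForcingSet_none
    fun j hj => ?_
  by_cases hjd : j ∈ rimHoles n
  · refine leakyForces_wheelForcingSet_of_mem (by omega) hjd (Or.inl ?_)
    simp only [hL', coe_insert, coe_singleton, Set.mem_insert_iff, Set.mem_singleton_iff,
      Option.some_inj, sub_left_inj, not_or]
    refine ⟨hj, fun h => add_one_add_one_notMem_rimHoles (by omega) hd ?_⟩
    rwa [← h, sub_add_cancel]
  · exact leakyForces_wheelForcingSet_of_notMem hjd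

end UpperBound

section LowerBound

variable {n : ℕ} [NeZero n]

theorem wheelGraph_isLeakyFort_pair (hn : 3 ≤ n) {z w : Fin n}
    (hw : w = z + 1 ∨ w = z + 1 + 1) :
    (wheelGraph n).IsLeakyFort_s12 {some (z - 1), some (w + 1)} {some z, some w} := by
  have hzw : z ≠ w := by
    rcases hw with rfl | rfl
    · simp only [ne_eq, left_eq_add, Fin.one_eq_zero_iff]
      omega
    · simpa [add_assoc] using Fin.one_add_one_ne_zero hn
  have hadj_iff : ∀ {i j : Fin n}, (wheelGraph n).Adj (some i) (some j) ↔ j = i - 1 ∨ j = i + 1 :=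
    wheelGraph_adj_some_some.trans (cycleGraph_adj_iff (by omega))
  rintro (_ | a) v hu hleak hv hadj
  · rcases hv with rfl | rfl
    · exact ⟨some w, by simp, by simpa using hzw.symm, by simp⟩
    · exact ⟨some z, by simp, by simpa using hzw, by simp⟩
  simp only [Set.mem_insert_iff, Set.mem_singleton_iff, Option.some_inj, not_or] at hu hleak hv
  rcases hv with rfl | rfl <;> rcases hadj_iff.mp hadj with h | h
  · have ha : a = z + 1 := sub_eq_iff_eq_add.mp h.symm
    rcases hw with rfl | rfl
    · exact absurd ha hu.2
    · exact ⟨some (z + 1 + 1), by simp, by simpa using hzw.symm, hadj_iff.mpr (.inr (ha ▸ rfl))⟩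
  · exact absurd (eq_sub_of_add_eq h.symm) hleak.1
  · exact absurd (sub_eq_iff_eq_add.mp h.symm) hleak.2
  · rcases hw with hw | hw
    · exact absurd (add_right_cancel (h.symm.trans hw)) hu.1
    · have ha : a = z + 1 := add_right_cancel (h.symm.trans hw)
      refine ⟨some z, by simp, by simpa using hzw, hadj_iff.mpr (.inl ?_)⟩
      rw [ha, add_sub_cancel_right]

theorem some_mem_of_wheelGraph_isLeakyForcingSet (hn : 3 ≤ n) {S : Set (Option (Fin n))}
    (hS : (wheelGraph n).IsLeakyForcingSet 2 S) {z w : Fin n} (hz : some z ∉ S)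
    (hw : w = z + 1 ∨ w = z + 1 + 1) : some w ∈ S := by
  classical
  by_contra hwS
  refine hS.not_isLeakyFort card_le_two ⟨some z, Set.mem_insert _ _⟩ ?_
    (by simpa using wheelGraph_isLeakyFort_pair hn hw)
  rw [Set.disjoint_right]
  rintro _ (rfl | rfl)
  exacts [hz, hwS]

theorem le_card_of_wheelGraph_isLeakyForcingSet (hn : 3 ≤ n) {S : Finset (Option (Fin n))}
    (hS : (wheelGraph n).IsLeakyForcingSet 2 S) : (2 * n + 2) / 3 + 1 ≤ S.card := by
  classical
  set U := S.eraseNoneᶜ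
  have hmemU : ∀ z, z ∈ U ↔ some z ∉ S := by simp [U]
  have hU : U.card + S.eraseNone.card = n := by
    have := (card_le_univ S.eraseNone).trans_eq (Fintype.card_fin n)
    rw [card_compl, Fintype.card_fin]
    omega
  set N := U.image (· - 1) ∪ U ∪ U.image (· + 1)
  have hN : N.card = 3 * U.card := by
    refine card_image_sub_union_union_image_add fun z hz => ?_
    simp only [hmemU, not_not] at hz ⊢
    exact ⟨some_mem_of_wheelGraph_isLeakyForcingSet hn hS hz (.inl rfl),
      some_mem_of_wheelGraph_isLeakyForcingSet hn hS hz (.inr rfl)⟩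
  by_cases hhub : none ∈ S
  · have hS_card := card_eraseNone_of_mem hhub
    have hS_pos : 0 < S.card := card_pos.mpr ⟨none, hhub⟩
    have hN_le : N.card ≤ n := (card_le_univ N).trans_eq (Fintype.card_fin n)
    omega
  have hmiss : 3 ≤ Nᶜ.card := by
    by_contra! h
    refine hS.not_isLeakyFort (L := Nᶜ.map .some) (by rw [card_map]; omega)
      (F := insert none (some '' U)) ⟨none, Set.mem_insert _ _⟩ ?_ ?_
    · rw [Set.disjoint_right]
      rintro _ (rfl | ⟨z, hz, rfl⟩)
      exacts [hhub, (hmemU z).mp hz]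
    · refine wheelGraph_isLeakyFort_insert_none fun a haU haL => ?_
      have haN : a ∈ N := by simpa using haL
      simp only [N, mem_union, mem_image] at haN
      rcases haN with (⟨z, hz, rfl⟩ | ha) | ⟨z, hz, rfl⟩
      · exact ⟨z, hz, by simp [cycleGraph_adj_iff (by omega : 2 ≤ n)]⟩
      · exact absurd ha haU
      · exact ⟨z, hz, by simp [cycleGraph_adj_iff (by omega : 2 ≤ n)]⟩
  rw [card_compl, Fintype.card_fin] at hmiss
  have hS_card := card_eraseNone_of_not_mem hhub
  omega

end LowerBound

theorem wheel_two_forcing_number (n : ℕ) (hn : 4 ≤ n) :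
    (wheelGraph n).leakyForcingNumber 2 = (2 * n + 2) / 3 + 1 := by
  have : NeZero n := ⟨by omega⟩
  exact leakyForcingNumber_eq (isLeakyForcingSet_wheelForcingSet (by omega))
    (card_wheelForcingSet n) fun _ hT => le_card_of_wheelGraph_isLeakyForcingSet (by omega) hT
end

section
/- For finite simple graphs G and H and any ℓ ≥ 0, the ℓ-forcing number of the Cartesian product satisfies Z_{(ℓ)}(G □ H) ≤ min(|V(G)| · Z_{(ℓ)}(H), |V(H)| · Z_{(ℓ)}(G)). -/
open SimpleGraph

/-!
Colour every copy `{x} × S` of a minimum `ℓ`-forcing set `S` of `H`. Projecting at most `ℓ`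
leaks of `G □ H` to `W` gives at most `ℓ` leaks of `H`, and every force `u → v` of `H` under the
projected leaks is replayed in each layer `{x} × W` as `(x, u) → (x, v)`: the neighbours
`(x', u)` of `(x, u)` outside the layer are already coloured, because `u` is coloured in every
layer at once. The other bound follows by symmetry, since `G □ H ≃g H □ G`.
-/

namespace SimpleGraph

variable {V V' W : Type*} {G : SimpleGraph V} {G' : SimpleGraph V'} {H : SimpleGraph W} {ℓ : ℕ}

theorem LeakyForces.map_iso (e : G ≃g G') {L S : Set V} {v : V} (h : G.LeakyForces L S v) :
    G'.LeakyForces (e '' L) (e '' S) (e v) := by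
  induction h with
  | init v hv => exact .init _ ⟨v, hv, rfl⟩
  | force u v hu _ huv _ ihu ihall =>
    refine .force (e u) (e v) (by simpa using hu) ihu (e.map_adj_iff.2 huv) fun w' hw' hne => ?_
    obtain ⟨w, rfl⟩ := e.surjective w'
    exact ihall w (e.map_adj_iff.1 hw') (ne_of_apply_ne e hne)

theorem IsLeakyForcingSet.map_iso (e : G ≃g G') {S : Set V} (hS : G.IsLeakyForcingSet ℓ S) :
    G'.IsLeakyForcingSet ℓ (e '' S) := by
  intro L hL v
  have hforces := (hS (L.map e.symm.toEquiv.toEmbedding) (by simpa using hL) (e.symm v)).map_iso e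
  simpa [Set.image_image] using hforces

theorem leakyForcingNumber_le_card {S : Finset V} (hS : G.IsLeakyForcingSet ℓ S) :
    G.leakyForcingNumber ℓ ≤ S.card :=
  Nat.sInf_le ⟨S, rfl, hS⟩

theorem exists_isLeakyForcingSet_card_eq [Fintype V] (G : SimpleGraph V) (ℓ : ℕ) :
    ∃ S : Finset V, S.card = G.leakyForcingNumber ℓ ∧ G.IsLeakyForcingSet ℓ S :=
  Nat.sInf_mem (s := {k | ∃ S : Finset V, S.card = k ∧ G.IsLeakyForcingSet ℓ ↑S})
    ⟨_, Finset.univ, rfl, fun _ _ v => .init v (by simp)⟩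

theorem Iso.leakyForcingNumber_le [Fintype V] (e : G ≃g G') :
    G'.leakyForcingNumber ℓ ≤ G.leakyForcingNumber ℓ := by
  classical
  obtain ⟨S, hcard, hS⟩ := G.exists_isLeakyForcingSet_card_eq ℓ
  calc G'.leakyForcingNumber ℓ ≤ (S.map e.toEquiv.toEmbedding).card :=
        leakyForcingNumber_le_card (by simpa using hS.map_iso e)
    _ = G.leakyForcingNumber ℓ := by rw [Finset.card_map, hcard]

variable (G)

theorem LeakyForces.boxProd_univ_prod {L : Set (V × W)} {L' S : Set W}
    (hL : Prod.snd '' L ⊆ L') {y : W} (hy : H.LeakyForces L' S y) (x : V) :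
    (G □ H).LeakyForces L (Set.univ ×ˢ S) (x, y) := by
  induction hy generalizing x with
  | init y hy => exact .init _ ⟨trivial, hy⟩
  | force u v hu _ huv _ ihu ihall =>
    refine .force (x, u) (x, v) (fun h => hu (hL ⟨_, h, rfl⟩)) (ihu x)
      (boxProd_adj.2 (.inr ⟨huv, rfl⟩)) ?_
    rintro ⟨x', w⟩ hadj hne
    rcases boxProd_adj.1 hadj with ⟨-, rfl : u = w⟩ | ⟨hw, rfl : x = x'⟩
    · exact ihu x'
    · exact ihall w hw (fun h => hne (by rw [h])) x

theorem IsLeakyForcingSet.univ_prod {S : Set W} (hS : H.IsLeakyForcingSet ℓ S) :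
    (G □ H).IsLeakyForcingSet ℓ (Set.univ ×ˢ S) := by
  classical
  intro L hL p
  have hforces := hS (L.image Prod.snd) (Finset.card_image_le.trans hL) p.2
  exact hforces.boxProd_univ_prod G (by simp) p.1

theorem leakyForcingNumber_boxProd_le [Fintype V] [Fintype W] (H : SimpleGraph W) :
    (G □ H).leakyForcingNumber ℓ ≤ Fintype.card V * H.leakyForcingNumber ℓ := by
  obtain ⟨S, hcard, hS⟩ := H.exists_isLeakyForcingSet_card_eq ℓ
  calc (G □ H).leakyForcingNumber ℓ ≤ (Finset.univ ×ˢ S).card :=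
        leakyForcingNumber_le_card (by simpa using hS.univ_prod G)
    _ = Fintype.card V * H.leakyForcingNumber ℓ := by
        rw [Finset.card_product, hcard, Finset.card_univ]

end SimpleGraph

theorem boxProd_leaky_forcing_le {V W : Type*} [Fintype V] [Fintype W]
    (G : SimpleGraph V) (H : SimpleGraph W) (ℓ : ℕ) :
    (G □ H).leakyForcingNumber ℓ ≤
      min (Fintype.card V * H.leakyForcingNumber ℓ)
        (Fintype.card W * G.leakyForcingNumber ℓ) :=
  le_min (G.leakyForcingNumber_boxProd_le H)
    ((boxProdComm H G).leakyForcingNumber_le.trans (H.leakyForcingNumber_boxProd_le G))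
end

section
/- If S is an ℓ-forcing set of a graph G, then S × V(H) is an ℓ-forcing set of the Cartesian product G □ H. -/
open SimpleGraph

namespace SimpleGraph.LeakyForces

variable {V W : Type*} {G : SimpleGraph V} {H : SimpleGraph W} {L S : Set V}

/-- A force `u → v` in `G` lifts to the force `(u, w) → (v, w)` in every `H`-fibre: the other
neighbours of `(u, w)` are the `(x, w)` with `x` a `G`-neighbour of `u`, and the `(u, y)`, which
are colored because all of `{u} × W` is. -/
theorem boxProd_left {L' : Set (V × W)} (hL' : L' ⊆ Prod.fst ⁻¹' L) {v : V}
    (h : G.LeakyForces L S v) (w : W) : (G □ H).LeakyForces L' (S ×ˢ Set.univ) (v, w) := by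
  induction h generalizing w with
  | init v hv => exact .init _ ⟨hv, trivial⟩
  | force u v hu _ huv _ ih_u ih_nbr =>
    refine .force (u, w) (v, w) (fun hmem => hu (hL' hmem)) (ih_u w) (.inl ⟨huv, rfl⟩) ?_
    rintro ⟨x, y⟩ (⟨hux, rfl⟩ | ⟨-, rfl⟩) hne
    · exact ih_nbr x hux (fun hxv => hne (by rw [hxv])) w
    · exact ih_u y

end SimpleGraph.LeakyForces

theorem boxProd_leaky_forcing_set_general {V W : Type*}
    (G : SimpleGraph V) (H : SimpleGraph W) (ℓ : ℕ) (S : Set V)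
    (hS : G.IsLeakyForcingSet ℓ S) :
    (G □ H).IsLeakyForcingSet ℓ (S ×ˢ (Set.univ : Set W)) := by
  classical
  rintro L hL ⟨v, w⟩
  have hproj : (L : Set (V × W)) ⊆ Prod.fst ⁻¹' ↑(L.image Prod.fst) := by
    rw [Finset.coe_image]
    exact Set.subset_preimage_image _ _
  exact (hS _ (Finset.card_image_le.trans hL) v).boxProd_left hproj w

theorem boxProd_leaky_forcing_set {V W : Type*} [Fintype V] [Fintype W]
    (G : SimpleGraph V) (H : SimpleGraph W) (ℓ : ℕ) (S : Set V)
    (hS : G.IsLeakyForcingSet ℓ S) :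
    (G □ H).IsLeakyForcingSet ℓ (S ×ˢ (Set.univ : Set W)) :=
  boxProd_leaky_forcing_set_general G H ℓ S hS
end

section
/- For the hypercube Q_d with d ≥ 2, the 1-forcing number equals 2^{d−1}. -/
open SimpleGraph

/-- The `d`-dimensional hypercube: vertices are binary strings of length `d`, adjacent
iff they differ in exactly one coordinate. -/
def hypercubeGraph (d : ℕ) : SimpleGraph (Fin d → Bool) where
  Adj x y := (Finset.univ.filter fun i => x i ≠ y i).card = 1
  symm := by
    constructor
    intro x y h
    have he : (Finset.univ.filter fun i => y i ≠ x i)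
        = (Finset.univ.filter fun i => x i ≠ y i) := by
      apply Finset.filter_congr
      intro i _
      simp [ne_comm]
    rw [he]
    exact h
  loopless := by
    constructor
    intro x h
    simp at h

/-!
With the half cube `{x | x i = false}` colored, every other vertex `y` is forced by its neighbour
across coordinate `i`, whose remaining neighbours all lie in the half cube; if that neighbour is
the leak, `y` is forced instead by its neighbour across a second coordinate `j`.

Conversely, already without leaks: the anticommuting Jordan–Wigner sign matrices `γᵢ` give a
signed adjacency matrix `A = ∑ γᵢ` of `Q_d` with `A² = d`. Both `A - √d` and `A + √d` have the
off-diagonal pattern of `Q_d` and annihilate each other, and a kernel vector of such a pattern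
matrix vanishing on a forcing set vanishes everywhere. Hence `u ↦ ((A - √d) u, (A + √d) u)`,
restricted to a forcing set `S`, is injective, and `2 ^ d ≤ 2 |S|`.
-/

open Matrix

def Matrix.HasOffDiagPattern {V R : Type*} [Zero R] (G : SimpleGraph V) (A : Matrix V V R) :
    Prop :=
  ∀ x y, x ≠ y → (A x y ≠ 0 ↔ G.Adj x y)

lemma Matrix.HasOffDiagPattern.sub_smul_one {V R : Type*} [DecidableEq V] [Ring R]
    {G : SimpleGraph V} {A : Matrix V V R} (hA : A.HasOffDiagPattern G) (a : R) :
    (A - a • 1).HasOffDiagPattern G := fun x y hxy => by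
  simpa [Matrix.one_apply_ne hxy] using hA x y hxy

lemma SimpleGraph.LeakyForces.apply_eq_zero_of_mulVec_eq_zero {V R : Type*} [Fintype V]
    [Semiring R] [NoZeroDivisors R] {G : SimpleGraph V} {L S : Set V} {A : Matrix V V R}
    (hA : A.HasOffDiagPattern G) {f : V → R} (hf : A *ᵥ f = 0) (hS : ∀ s ∈ S, f s = 0) {v : V}
    (hv : G.LeakyForces L S v) : f v = 0 := by
  induction hv with
  | init v hv => exact hS v hv
  | force u v _ _ huv _ ihu ihall =>
    have hrow : ∑ w, A u w * f w = A u v * f v := Finset.sum_eq_single v (fun w _ hwv => by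
      by_cases hwu : w = u
      · rw [hwu, ihu, mul_zero]
      by_cases huw : G.Adj u w
      · rw [ihall w huw hwv, mul_zero]
      · rw [not_ne_iff.mp (mt (hA u w (Ne.symm hwu)).mp huw), zero_mul]) (by simp)
    have huv0 : A u v * f v = 0 := hrow ▸ congrFun hf u
    exact (mul_eq_zero.mp huv0).resolve_left ((hA u v huv.ne).mpr huv)

lemma card_le_two_mul_card_of_forall_leakyForces {V K : Type*} [Fintype V] [DecidableEq V]
    [Field K] {G : SimpleGraph V} {A : Matrix V V K} (hA : A.HasOffDiagPattern G) {a b : K}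
    (hab : a ≠ b) (hAab : (A - a • 1) * (A - b • 1) = 0) {L : Set V} (S : Finset V)
    (hS : ∀ v, G.LeakyForces L S v) : Fintype.card V ≤ 2 * S.card := by
  set Aa := A - a • 1
  set Ab := A - b • 1
  have hAba : Ab * Aa = 0 := by
    rw [← hAab]
    simp only [Aa, Ab, sub_mul, mul_sub, smul_mul_assoc, mul_smul_comm, one_mul, mul_one]
    module
  let restrictS : (V → K) →ₗ[K] (S → K) := LinearMap.funLeft K K Subtype.val
  let Φ := (restrictS ∘ₗ Aa.mulVecLin).prod (restrictS ∘ₗ Ab.mulVecLin)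
  have hΦ : Function.Injective Φ := by
    rw [← LinearMap.ker_eq_bot, LinearMap.ker_eq_bot']
    intro u hu
    -- `Aa u` lies in the kernel of `Ab`, vanishes on `S`, and so vanishes everywhere by forcing
    have hAa : Aa *ᵥ u = 0 := funext fun v =>
      (hS v).apply_eq_zero_of_mulVec_eq_zero (hA.sub_smul_one b)
        (by rw [Matrix.mulVec_mulVec, hAba, Matrix.zero_mulVec])
        fun s hs => congrFun (congrArg Prod.fst hu) ⟨s, hs⟩
    have hAb : Ab *ᵥ u = 0 := funext fun v =>
      (hS v).apply_eq_zero_of_mulVec_eq_zero (hA.sub_smul_one a)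
        (by rw [Matrix.mulVec_mulVec, hAab, Matrix.zero_mulVec])
        fun s hs => congrFun (congrArg Prod.snd hu) ⟨s, hs⟩
    have : (b - a) • u = 0 := by
      rw [← Matrix.one_mulVec u, ← Matrix.smul_mulVec, sub_smul, ← sub_sub_sub_cancel_left _ _ A,
        Matrix.sub_mulVec, hAa, hAb, sub_zero]
    exact (smul_eq_zero.mp this).resolve_left (sub_ne_zero.mpr hab.symm)
  simpa [Module.finrank_fintype_fun_eq_card, two_mul] using
    LinearMap.finrank_le_finrank_of_injective hΦ

lemma sum_mul_sum_self_of_anticommute {R ι : Type*} [Ring R] [DecidableEq ι] (γ : ι → R)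
    (hsq : ∀ i, γ i * γ i = 1) (hanti : ∀ i j, i ≠ j → γ i * γ j = -(γ j * γ i))
    (s : Finset ι) : (∑ i ∈ s, γ i) * (∑ i ∈ s, γ i) = s.card := by
  induction s using Finset.induction_on with
  | empty => simp
  | insert a s ha ih =>
    have hcross : γ a * ∑ i ∈ s, γ i + (∑ i ∈ s, γ i) * γ a = 0 := by
      rw [Finset.mul_sum, Finset.sum_mul, ← Finset.sum_add_distrib]
      refine Finset.sum_eq_zero fun i hi => ?_
      rw [hanti a i (ne_of_mem_of_not_mem hi ha).symm, neg_add_cancel]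
    rw [Finset.sum_insert ha, Finset.card_insert_of_notMem ha, Nat.cast_succ, add_mul, mul_add,
      mul_add, hsq, ih, add_comm (s.card : R) 1]
    linear_combination (norm := abel) hcross

variable {d : ℕ}

def flipAt (i : Fin d) (x : Fin d → Bool) : Fin d → Bool := Function.update x i (!x i)

@[simp] lemma flipAt_apply_self (i : Fin d) (x : Fin d → Bool) : flipAt i x i = !x i :=
  Function.update_self i _ x

lemma flipAt_apply_of_ne {i k : Fin d} (h : k ≠ i) (x : Fin d → Bool) : flipAt i x k = x k :=
  Function.update_of_ne h _ x

@[simp] lemma flipAt_flipAt (i : Fin d) (x : Fin d → Bool) : flipAt i (flipAt i x) = x := by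
  funext k
  by_cases h : k = i
  · subst h; simp
  · rw [flipAt_apply_of_ne h, flipAt_apply_of_ne h]

lemma flipAt_injective (i : Fin d) : Function.Injective (flipAt i) :=
  Function.LeftInverse.injective (flipAt_flipAt i)

lemma flipAt_comm (i j : Fin d) (x : Fin d → Bool) :
    flipAt j (flipAt i x) = flipAt i (flipAt j x) := by
  funext k
  by_cases hki : k = i <;> by_cases hkj : k = j
  · subst hki hkj; rfl
  · subst hki; simp [flipAt, hkj, Ne.symm hkj]
  · subst hkj; simp [flipAt, hki, Ne.symm hki]
  · simp [flipAt, Function.update_apply, hki, hkj]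

lemma flipAt_ne_flipAt {i j : Fin d} (h : i ≠ j) (x : Fin d → Bool) : flipAt i x ≠ flipAt j x :=
  fun he => by simpa [flipAt_apply_of_ne h] using congrFun he i

lemma flipAt_ne_self (i : Fin d) (x : Fin d → Bool) : flipAt i x ≠ x :=
  fun he => by simpa using congrFun he i

lemma hypercubeGraph_adj_iff {x y : Fin d → Bool} :
    (hypercubeGraph d).Adj x y ↔ ∃ i, y = flipAt i x := by
  simp only [hypercubeGraph, Finset.card_eq_one, Finset.ext_iff, Finset.mem_filter,
    Finset.mem_univ, true_and, Finset.mem_singleton, funext_iff, flipAt, Function.update_apply]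
  refine exists_congr fun i => forall_congr' fun j => ?_
  split_ifs with h
  · subst h; cases x j <;> cases y j <;> simp
  · cases x j <;> cases y j <;> simp [h]

lemma hypercubeGraph_adj_flipAt (i : Fin d) (x : Fin d → Bool) :
    (hypercubeGraph d).Adj x (flipAt i x) :=
  hypercubeGraph_adj_iff.mpr ⟨i, rfl⟩

noncomputable def jwSign (x : Fin d → Bool) (i : Fin d) : ℝ :=
  ∏ k : Fin d, if i < k ∧ x k = true then -1 else 1

lemma jwSign_mul_self (x : Fin d → Bool) (i : Fin d) : jwSign x i * jwSign x i = 1 := by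
  rw [jwSign, ← Finset.prod_mul_distrib]
  exact Finset.prod_eq_one fun k _ => by split_ifs <;> norm_num

lemma jwSign_ne_zero (x : Fin d → Bool) (i : Fin d) : jwSign x i ≠ 0 :=
  left_ne_zero_of_mul_eq_one (jwSign_mul_self x i)

lemma jwSign_flipAt_of_le {i j : Fin d} (h : i ≤ j) (x : Fin d → Bool) :
    jwSign (flipAt i x) j = jwSign x j := by
  refine Finset.prod_congr rfl fun k _ => ?_
  by_cases hk : k = i
  · subst hk; simp [not_lt.mpr h]
  · rw [flipAt_apply_of_ne hk]

lemma jwSign_flipAt_of_gt {i j : Fin d} (h : i < j) (x : Fin d → Bool) :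
    jwSign (flipAt j x) i = -jwSign x i := by
  simp only [jwSign, ← Finset.mul_prod_erase Finset.univ _ (Finset.mem_univ j), flipAt_apply_self]
  rw [Finset.prod_congr rfl fun k hk => by rw [flipAt_apply_of_ne (Finset.ne_of_mem_erase hk)]]
  cases x j <;> simp [h]

noncomputable def jwMatrix (i : Fin d) : Matrix (Fin d → Bool) (Fin d → Bool) ℝ :=
  Matrix.of fun x y => if y = flipAt i x then jwSign x i else 0

lemma jwMatrix_mul_jwMatrix (i j : Fin d) : jwMatrix i * jwMatrix j = Matrix.of fun x y =>
    if y = flipAt j (flipAt i x) then jwSign x i * jwSign (flipAt i x) j else 0 := by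
  ext x y
  rw [Matrix.mul_apply, Finset.sum_eq_single (flipAt i x) (fun z _ hz => by simp [jwMatrix, hz])
    (by simp)]
  simp only [jwMatrix, Matrix.of_apply]
  split_ifs <;> ring

lemma jwMatrix_mul_self (i : Fin d) : jwMatrix i * jwMatrix i = 1 := by
  ext x y
  rw [jwMatrix_mul_jwMatrix, Matrix.of_apply, flipAt_flipAt, jwSign_flipAt_of_le le_rfl,
    jwSign_mul_self, Matrix.one_apply]
  exact if_congr eq_comm rfl rfl

lemma jwMatrix_anticomm {i j : Fin d} (h : i ≠ j) :
    jwMatrix i * jwMatrix j = -(jwMatrix j * jwMatrix i) := by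
  ext x y
  simp only [jwMatrix_mul_jwMatrix, Matrix.of_apply, Matrix.neg_apply, flipAt_comm i j]
  rcases h.lt_or_gt with hij | hji
  · rw [jwSign_flipAt_of_le hij.le, jwSign_flipAt_of_gt hij]
    split_ifs <;> ring
  · rw [jwSign_flipAt_of_gt hji, jwSign_flipAt_of_le hji.le]
    split_ifs <;> ring

noncomputable def signedHypercubeMatrix (d : ℕ) : Matrix (Fin d → Bool) (Fin d → Bool) ℝ :=
  ∑ i, jwMatrix i

lemma signedHypercubeMatrix_mul_self :
    signedHypercubeMatrix d * signedHypercubeMatrix d = (d : ℝ) • 1 := by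
  unfold signedHypercubeMatrix
  simpa [Nat.cast_smul_eq_nsmul] using sum_mul_sum_self_of_anticommute jwMatrix jwMatrix_mul_self
    (fun _ _ => jwMatrix_anticomm) Finset.univ

lemma signedHypercubeMatrix_hasOffDiagPattern :
    (signedHypercubeMatrix d).HasOffDiagPattern (hypercubeGraph d) := by
  intro x y _
  rw [hypercubeGraph_adj_iff, signedHypercubeMatrix, Matrix.sum_apply]
  constructor
  · intro hne
    obtain ⟨i, _, hi⟩ := Finset.exists_ne_zero_of_sum_ne_zero hne
    by_contra! hy
    simp [jwMatrix, hy i] at hi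
  · rintro ⟨i, rfl⟩
    rw [Finset.sum_eq_single i (fun j _ hj => by simp [jwMatrix, flipAt_ne_flipAt hj.symm])
      (by simp)]
    simpa [jwMatrix] using jwSign_ne_zero x i

lemma hypercubeGraph_two_pow_le_two_mul_card (hd : 0 < d) {L : Set (Fin d → Bool)}
    (S : Finset (Fin d → Bool)) (hS : ∀ v, (hypercubeGraph d).LeakyForces L S v) :
    2 ^ d ≤ 2 * S.card := by
  set r := √(d : ℝ)
  have hr : 0 < r := Real.sqrt_pos.mpr (by exact_mod_cast hd)
  have hr2 : r * r = d := Real.mul_self_sqrt (Nat.cast_nonneg d)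
  have hroots : (signedHypercubeMatrix d - r • 1) * (signedHypercubeMatrix d - (-r) • 1) = 0 := by
    simp only [sub_mul, mul_sub, smul_mul_assoc, mul_smul_comm, one_mul, mul_one,
      signedHypercubeMatrix_mul_self]
    match_scalars
    · linear_combination -hr2
    · ring
  simpa using card_le_two_mul_card_of_forall_leakyForces signedHypercubeMatrix_hasOffDiagPattern
    (by linarith) hroots S hS

def halfCube (i : Fin d) : Finset (Fin d → Bool) :=
  Finset.univ.filter fun x => x i = false

lemma card_halfCube (i : Fin d) : (halfCube i).card = 2 ^ (d - 1) := by
  have hflip : (Finset.univ.filter fun x : Fin d → Bool => ¬x i = false).card =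
      (halfCube i).card :=
    Finset.card_nbij' (flipAt i) (flipAt i) (fun x hx => by simp_all [halfCube])
      (fun x hx => by simp_all [halfCube]) (fun x _ => flipAt_flipAt i x)
      (fun x _ => flipAt_flipAt i x)
  have htotal := Finset.card_filter_add_card_filter_not (s := Finset.univ) fun x : Fin d → Bool =>
    x i = false
  rw [hflip, Finset.card_univ, Fintype.card_fun, Fintype.card_bool, Fintype.card_fin] at htotal
  have hd : 2 ^ d = 2 ^ (d - 1) * 2 := by rw [← pow_succ, Nat.sub_add_cancel i.pos]
  change (halfCube i).card + (halfCube i).card = 2 ^ d at htotal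
  omega

lemma leakyForces_halfCube_of_flipAt_notMem {i : Fin d} {L : Set (Fin d → Bool)}
    {y : Fin d → Bool} (hy : flipAt i y ∉ L) : (hypercubeGraph d).LeakyForces L (halfCube i) y := by
  have hmem : ∀ z : Fin d → Bool, z i = false → z ∈ (halfCube i : Set _) := by simp [halfCube]
  cases hyi : y i
  · exact .init y (hmem y hyi)
  refine flipAt_flipAt i y ▸ .force (flipAt i y) _ hy (.init _ (hmem _ (by simp [hyi])))
    (hypercubeGraph_adj_flipAt i _) fun w hadj hw => .init w (hmem w ?_)
  obtain ⟨j, rfl⟩ := hypercubeGraph_adj_iff.mp hadj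
  have hji : i ≠ j := by rintro rfl; exact hw rfl
  rw [flipAt_apply_of_ne hji, flipAt_apply_self, hyi, Bool.not_true]

lemma isLeakyForcingSet_halfCube {i j : Fin d} (hij : i ≠ j) :
    (hypercubeGraph d).IsLeakyForcingSet 1 (halfCube i) := by
  intro L hL y
  by_cases hy : flipAt i y ∈ L
  swap
  · exact leakyForces_halfCube_of_flipAt_notMem hy
  have hleak : ∀ z ∈ L, z = flipAt i y := fun z hz => Finset.card_le_one.mp hL z hz _ hy
  have hcolored (z) (hz : z ≠ y) : (hypercubeGraph d).LeakyForces L (halfCube i) z :=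
    leakyForces_halfCube_of_flipAt_notMem fun hzL => hz (flipAt_injective i (hleak _ hzL))
  have hforce := LeakyForces.force (flipAt j y) _
    (fun h => flipAt_ne_flipAt hij.symm y (hleak _ h)) (hcolored _ (flipAt_ne_self j y))
    (hypercubeGraph_adj_flipAt j _) fun z _ hz => hcolored z (by rwa [flipAt_flipAt] at hz)
  rwa [flipAt_flipAt] at hforce

theorem hypercube_one_forcing (d : ℕ) (hd : 2 ≤ d) :
    (hypercubeGraph d).leakyForcingNumber 1 = 2 ^ (d - 1) := by
  have hhalf : 2 ^ (d - 1) ∈ {k | ∃ S : Finset (Fin d → Bool),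
      S.card = k ∧ (hypercubeGraph d).IsLeakyForcingSet 1 S} :=
    ⟨halfCube ⟨0, by omega⟩, card_halfCube _,
      isLeakyForcingSet_halfCube (j := ⟨1, by omega⟩) (by simp)⟩
  refine le_antisymm (Nat.sInf_le hhalf) (le_csInf ⟨_, hhalf⟩ ?_)
  rintro k ⟨S, rfl, hS⟩
  have hzero := hypercubeGraph_two_pow_le_two_mul_card (by omega) S (hS ∅ (by simp))
  have hpow : 2 ^ d = 2 ^ (d - 1) * 2 := by rw [← pow_succ, Nat.sub_add_cancel (by omega)]
  omega
end

section
/- For the grid graph P_n □ P_m, the set of all vertices lying on any two sides (two boundary rows/columns, whether opposite or consecutive) is a 1-forcing set. -/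
/-!
Sweeping away from a colored side, a fully colored line (row or column) forces the next parallel
line, except at the leak `x`. So each sweep colors every line up to the one through `x`. For two
opposite sides the two sweeps cover everything between them. For two adjacent sides, say the
first row and the first column, the sweep down the rows colors the whole row through `x`; the
sweep along the columns then gets past `x`, because the vertex `x` fails to force lies in that row.
-/

open SimpleGraph

namespace SimpleGraph

variable {V W : Type*}

/-- Each vertex `v` of positive rank can be forced by `pred v` as soon as all vertices of rank at
most `rank (pred v)` are colored. -/
structure Sweep (G : SimpleGraph V) where
  rank : V → ℕ
  pred : V → V
  adj_pred : ∀ v, 0 < rank v → G.Adj (pred v) v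
  rank_pred : ∀ v, 0 < rank v → rank (pred v) + 1 = rank v
  rank_le_of_adj_pred : ∀ v w, 0 < rank v → G.Adj (pred v) w → w ≠ v → rank w ≤ rank (pred v)

variable {G : SimpleGraph V} {L S : Set V}

theorem isLeakyForcingSet_one_of_subset_singleton
    (h : ∀ (L : Set V) (x : V), L ⊆ {x} → ∀ v, G.LeakyForces L S v) :
    G.IsLeakyForcingSet 1 S := by
  intro L hL v
  have : Nonempty V := ⟨v⟩
  obtain ⟨x, hx⟩ := Finset.card_le_one_iff_subset_singleton.mp hL
  exact h L x (by exact_mod_cast hx) v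

namespace Sweep

def base (s : G.Sweep) : Set V := {v | s.rank v = 0}

theorem leakyForces_of_rank_le (s : G.Sweep) (hS : s.base ⊆ S) {K : ℕ}
    (hleak : ∀ v, 0 < s.rank v → s.rank v ≤ K → s.pred v ∈ L → G.LeakyForces L S v) :
    ∀ v, s.rank v ≤ K → G.LeakyForces L S v := by
  intro v
  induction hv : s.rank v using Nat.strong_induction_on generalizing v with
  | _ k ih =>
    intro hk
    rcases Nat.eq_zero_or_pos k with rfl | hpos
    · exact .init v (hS hv)
    subst hv
    by_cases hL : s.pred v ∈ L
    · exact hleak v hpos hk hL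
    have hpred := s.rank_pred v hpos
    refine .force _ v hL (ih _ (by omega) _ rfl (by omega)) (s.adj_pred v hpos) fun w hw hne => ?_
    have hrank := s.rank_le_of_adj_pred v w hpos hw hne
    exact ih _ (by omega) w rfl (by omega)

theorem leakyForces_of_rank_le_rank_of_subset_singleton (s : G.Sweep) (hS : s.base ⊆ S) {x v : V}
    (hL : L ⊆ {x}) (hv : s.rank v ≤ s.rank x) : G.LeakyForces L S v := by
  refine s.leakyForces_of_rank_le hS (fun u hu hux hpred => ?_) v hv
  have hrank := s.rank_pred u hu
  rw [hL hpred] at hrank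
  omega

theorem isLeakyForcingSet_base_union_of_rank_add (s t : G.Sweep) {N : ℕ}
    (hst : ∀ v, s.rank v + t.rank v = N) : G.IsLeakyForcingSet 1 (s.base ∪ t.base) := by
  refine isLeakyForcingSet_one_of_subset_singleton fun L x hL v => ?_
  rcases le_total (s.rank v) (s.rank x) with h | h
  · exact s.leakyForces_of_rank_le_rank_of_subset_singleton Set.subset_union_left hL h
  · refine t.leakyForces_of_rank_le_rank_of_subset_singleton Set.subset_union_right hL ?_
    have := hst v
    have := hst x
    omega

/-- `t` colors all vertices of `t`-rank at most that of the leak, and the vertex that the leak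
fails to force along `s` has the leak's `t`-rank. -/
theorem isLeakyForcingSet_base_union_of_rank_pred (s t : G.Sweep)
    (hst : ∀ v, 0 < s.rank v → t.rank (s.pred v) = t.rank v) :
    G.IsLeakyForcingSet 1 (s.base ∪ t.base) := by
  refine isLeakyForcingSet_one_of_subset_singleton fun L x hL v => ?_
  refine s.leakyForces_of_rank_le Set.subset_union_left (fun u hu _ hpred => ?_) v le_rfl
  refine t.leakyForces_of_rank_le_rank_of_subset_singleton Set.subset_union_right hL ?_
  rw [← hst u hu, hL hpred]

variable {W' : Type*} {G' : SimpleGraph W'}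

def comap (s : G'.Sweep) (e : G ≃g G') : G.Sweep where
  rank v := s.rank (e v)
  pred v := e.symm (s.pred (e v))
  adj_pred v hv := by simpa using e.symm.map_adj_iff.2 (s.adj_pred _ hv)
  rank_pred v hv := by simpa using s.rank_pred _ hv
  rank_le_of_adj_pred v w hv hadj hne := by
    simpa using s.rank_le_of_adj_pred (e v) (e w) hv (by simpa using e.map_adj_iff.2 hadj)
      (e.injective.ne hne)

def boxProdLeft (s : G.Sweep) (H : SimpleGraph W) : (G □ H).Sweep where
  rank p := s.rank p.1
  pred p := (s.pred p.1, p.2)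
  adj_pred p hp := boxProd_adj.2 (Or.inl ⟨s.adj_pred _ hp, rfl⟩)
  rank_pred p hp := s.rank_pred _ hp
  rank_le_of_adj_pred p q hp hadj hne := by
    rcases boxProd_adj.1 hadj with ⟨hG, h2⟩ | ⟨-, h1⟩
    · exact s.rank_le_of_adj_pred _ _ hp hG fun h1 => hne (Prod.ext h1 h2.symm)
    · exact h1 ▸ le_rfl

def boxProdRight (s : G.Sweep) (H : SimpleGraph W) : (H □ G).Sweep :=
  (s.boxProdLeft H).comap (boxProdComm H G)

@[simp]
theorem rank_boxProdLeft (s : G.Sweep) (H : SimpleGraph W) (p : V × W) :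
    (s.boxProdLeft H).rank p = s.rank p.1 :=
  rfl

@[simp]
theorem rank_boxProdRight (s : G.Sweep) (H : SimpleGraph W) (p : W × V) :
    (s.boxProdRight H).rank p = s.rank p.2 :=
  rfl

end Sweep

def pathGraphSweep (n : ℕ) : (pathGraph n).Sweep where
  rank := Fin.val
  pred j := ⟨j - 1, by omega⟩
  adj_pred j hj := pathGraph_adj.2 (Or.inl (by simp only; omega))
  rank_pred j hj := by simp only; omega
  rank_le_of_adj_pred j k hj hadj hne := by
    rw [pathGraph_adj] at hadj
    have := Fin.val_ne_of_ne hne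
    simp only at hadj ⊢
    omega

def pathGraphSweepRev (n : ℕ) : (pathGraph n).Sweep where
  rank j := n - 1 - j
  pred j := ⟨min (j + 1) (n - 1), by omega⟩
  adj_pred j hj := pathGraph_adj.2 (Or.inr (by simp only; omega))
  rank_pred j hj := by simp only; omega
  rank_le_of_adj_pred j k hj hadj hne := by
    rw [pathGraph_adj] at hadj
    have := Fin.val_ne_of_ne hne
    simp only at hadj ⊢
    omega

theorem pathGraphSweep_rank_add_pathGraphSweepRev_rank {n : ℕ} (j : Fin n) :
    (pathGraphSweep n).rank j + (pathGraphSweepRev n).rank j = n - 1 := by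
  simp only [pathGraphSweep, pathGraphSweepRev]
  omega

end SimpleGraph

inductive GridSide
  | firstRow
  | lastRow
  | firstCol
  | lastCol

namespace GridSide

def sweep (n m : ℕ) : GridSide → (pathGraph n □ pathGraph m).Sweep
  | firstRow => (pathGraphSweep n).boxProdLeft _
  | lastRow => (pathGraphSweepRev n).boxProdLeft _
  | firstCol => (pathGraphSweep m).boxProdRight _
  | lastCol => (pathGraphSweepRev m).boxProdRight _

theorem isLeakyForcingSet_sweep_base_union {n m : ℕ} {σ τ : GridSide} (h : σ ≠ τ) :
    (pathGraph n □ pathGraph m).IsLeakyForcingSet 1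
      ((σ.sweep n m).base ∪ (τ.sweep n m).base) := by
  cases σ <;> cases τ <;> first
    | exact absurd rfl h
    | exact Sweep.isLeakyForcingSet_base_union_of_rank_pred _ _ fun _ _ => rfl
    | exact Sweep.isLeakyForcingSet_base_union_of_rank_add _ _ (N := n - 1) fun p => by
        simpa [sweep, add_comm] using pathGraphSweep_rank_add_pathGraphSweepRev_rank p.1
    | exact Sweep.isLeakyForcingSet_base_union_of_rank_add _ _ (N := m - 1) fun p => by
        simpa [sweep, add_comm] using pathGraphSweep_rank_add_pathGraphSweepRev_rank p.2

theorem exists_sweep_base_eq {n m : ℕ} (hn : 1 ≤ n) (hm : 1 ≤ m) {S : Set (Fin n × Fin m)}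
    (hS : S ∈ ({ {p | p.1 = ⟨0, hn⟩}, {p | p.1 = ⟨n - 1, Nat.sub_lt hn Nat.one_pos⟩},
              {p | p.2 = ⟨0, hm⟩}, {p | p.2 = ⟨m - 1, Nat.sub_lt hm Nat.one_pos⟩} } :
        Set (Set (Fin n × Fin m)))) :
    ∃ σ : GridSide, (σ.sweep n m).base = S := by
  rcases hS with rfl | rfl | rfl | rfl
  · exact ⟨firstRow, by ext; simp [sweep, Sweep.base, pathGraphSweep, Fin.ext_iff]⟩
  · exact ⟨lastRow, by ext; simp [sweep, Sweep.base, pathGraphSweepRev, Fin.ext_iff]; omega⟩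
  · exact ⟨firstCol, by ext; simp [sweep, Sweep.base, pathGraphSweep, Fin.ext_iff]⟩
  · exact ⟨lastCol, by ext; simp [sweep, Sweep.base, pathGraphSweepRev, Fin.ext_iff]; omega⟩

end GridSide

theorem grid_two_sides_one_forcing (n m : ℕ) (hn : 1 ≤ n) (hm : 1 ≤ m) :
    ∀ S₁ ∈ ({ {p | p.1 = ⟨0, by omega⟩}, {p | p.1 = ⟨n - 1, by omega⟩},
              {p | p.2 = ⟨0, by omega⟩}, {p | p.2 = ⟨m - 1, by omega⟩} } :
        Set (Set (Fin n × Fin m))),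
    ∀ S₂ ∈ ({ {p | p.1 = ⟨0, by omega⟩}, {p | p.1 = ⟨n - 1, by omega⟩},
              {p | p.2 = ⟨0, by omega⟩}, {p | p.2 = ⟨m - 1, by omega⟩} } :
        Set (Set (Fin n × Fin m))),
    S₁ ≠ S₂ →
      (SimpleGraph.pathGraph n □ SimpleGraph.pathGraph m).IsLeakyForcingSet 1 (S₁ ∪ S₂) := by
  intro S₁ hS₁ S₂ hS₂ hne
  obtain ⟨σ₁, rfl⟩ := GridSide.exists_sweep_base_eq hn hm hS₁
  obtain ⟨σ₂, rfl⟩ := GridSide.exists_sweep_base_eq hn hm hS₂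
  exact GridSide.isLeakyForcingSet_sweep_base_union (by rintro rfl; exact hne rfl)
end

section
/- For every n ≥ 1, the 1-forcing number of the square grid P_n □ P_n equals n. -/
open SimpleGraph

/-!
The staircase `(0,0), (0,1), (1,1), (1,2), …` of `n` cells is 1-forcing. If the leak lies on or
below the diagonal, the upper triangle is forced without ever using a diagonal cell as a forcer;
each lower diagonal is then forced by the previous one from both of its ends, the two chains
meeting at the leak. A leak above the diagonal is handled in the same way with the roles of the
two triangles exchanged.

Conversely, a 1-forcing set is zero forcing, and a zero forcing set is at least as large as the
nullity of any matrix whose off-diagonal nonzero pattern is the graph. For the grid we take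
`B ⊗ 1 - 1 ⊗ B`, with `B` the adjacency matrix of the path: it acts as `X ↦ X B - B X`, so its
kernel contains the `n` independent powers `1, B, …, B ^ (n - 1)`.
-/

open Matrix
open scoped Kronecker

namespace SimpleGraph

variable {V : Type*}

def ForcesInOrder {α : Type*} [LT α] (G : SimpleGraph V) (r : V → α) (u v : V) : Prop :=
  G.Adj u v ∧ r u < r v ∧ ∀ w, G.Adj u w → w ≠ v → r w < r v

variable {G : SimpleGraph V}

theorem leakyForces_of_forcesInOrder {L S : Set V} {α : Type*} [Preorder α] [WellFoundedLT α]
    (r : V → α) (h : ∀ v ∉ S, ∃ u ∉ L, G.ForcesInOrder r u v) (v : V) : G.LeakyForces L S v := by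
  induction v using (InvImage.wf r wellFounded_lt).induction with
  | _ v ih =>
  by_cases hv : v ∈ S
  · exact .init v hv
  obtain ⟨u, huL, huv, hu, hw⟩ := h v hv
  exact .force u v huL (ih u hu) huv fun w huw hwv => ih w (hw w huw hwv)

variable [Fintype V] {K : Type*} [Field K] {A : Matrix V V K}

theorem LeakyForces.apply_eq_zero_of_mulVec_eq_zero_s19 {L S : Set V}
    (hA : ∀ u v, u ≠ v → (A u v ≠ 0 ↔ G.Adj u v)) {x : V → K} (hx : A *ᵥ x = 0)
    (hxS : ∀ s ∈ S, x s = 0) {v : V} (hv : G.LeakyForces L S v) : x v = 0 := by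
  induction hv with
  | init v hv => exact hxS v hv
  | force u v _ _ huv _ hxu hxw =>
    have hrow : ∑ w, A u w * x w = A u v * x v := by
      refine Finset.sum_eq_single v (fun w _ hwv => ?_) (by simp)
      by_cases hwu : w = u
      · rw [hwu, hxu, mul_zero]
      by_cases huw : G.Adj u w
      · rw [hxw w huw hwv, mul_zero]
      · rw [not_ne_iff.1 (mt (hA u w (Ne.symm hwu)).1 huw), zero_mul]
    have hAx : A u v * x v = 0 := hrow ▸ congrFun hx u
    exact (mul_eq_zero.1 hAx).resolve_left ((hA u v huv.ne).2 huv)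

theorem finrank_ker_mulVecLin_le_card {L : Set V} (hA : ∀ u v, u ≠ v → (A u v ≠ 0 ↔ G.Adj u v))
    {S : Finset V} (hS : ∀ v, G.LeakyForces L S v) :
    Module.finrank K (LinearMap.ker A.mulVecLin) ≤ S.card := by
  let restrict := (LinearMap.funLeft K K ((↑) : S → V)).comp (LinearMap.ker A.mulVecLin).subtype
  have hinj : Function.Injective restrict := by
    rw [← LinearMap.ker_eq_bot, LinearMap.ker_eq_bot']
    rintro ⟨x, hx⟩ hxS
    ext v
    exact LeakyForces.apply_eq_zero_of_mulVec_eq_zero_s19 hA hx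
      (fun s hs => congrFun hxS ⟨s, hs⟩) (hS v)
  simpa using LinearMap.finrank_le_finrank_of_injective hinj

end SimpleGraph

instance SimpleGraph.pathGraph.decidableAdj (n : ℕ) : DecidableRel (pathGraph n).Adj :=
  fun _ _ => decidable_of_iff _ pathGraph_adj.symm

namespace SimpleGraph.pathGraph

variable {n : ℕ}

theorem boxProd_adj_iff {u v : Fin n × Fin n} :
    (pathGraph n □ pathGraph n).Adj u v ↔
      (u.1.val + 1 = v.1.val ∨ v.1.val + 1 = u.1.val) ∧ u.2.val = v.2.val ∨
      (u.2.val + 1 = v.2.val ∨ v.2.val + 1 = u.2.val) ∧ u.1.val = v.1.val := by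
  simp [boxProd_adj, pathGraph_adj, Fin.ext_iff]

def staircase (n : ℕ) : Finset (Fin n × Fin n) :=
  Finset.univ.image fun k : Fin n => (⟨k / 2, by omega⟩, ⟨(k + 1) / 2, by omega⟩)

theorem card_staircase (n : ℕ) : (staircase n).card = n := by
  rw [staircase, Finset.card_image_of_injective, Finset.card_univ, Fintype.card_fin]
  intro k l hkl
  have := congrArg (fun v : Fin n × Fin n => v.1.val + v.2.val) hkl
  simp only at this
  omega

theorem mem_staircase {v : Fin n × Fin n} :
    v ∈ staircase n ↔ (v.2.val = v.1.val ∨ v.2.val = v.1.val + 1) ∧ v.1.val + v.2.val < n := by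
  constructor
  · intro hv
    obtain ⟨k, -, rfl⟩ := Finset.mem_image.1 hv
    simp only
    omega
  · intro hv
    refine Finset.mem_image.2 ⟨⟨v.1.val + v.2.val, hv.2⟩, Finset.mem_univ _, ?_⟩
    ext <;> simp only <;> omega

/-- The upper triangle comes first, along its diagonals up to the antidiagonal and then along
antidiagonals; then the lower diagonals in turn, each forced from the right starting at its bottom
end, except that on the diagonal just below the leak the cells up to the leak's row are forced from
above starting at its top end. -/
def rankOfLeakBelow (ℓ v : Fin n × Fin n) : ℕ ×ₗ ℕ ×ₗ ℕ :=
  let i := v.1.val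
  let j := v.2.val
  if i ≤ j then
    if i + j < n then toLex (0, toLex (j - i, i)) else toLex (1, toLex (i + j, i))
  else if i - j = ℓ.1.val - ℓ.2.val + 1 ∧ i ≤ ℓ.1.val then toLex (2, toLex (i - j, i))
  else toLex (2, toLex (i - j, n - i))

theorem exists_forcer_of_leak_below {ℓ v : Fin n × Fin n} (hℓ : ℓ.2 ≤ ℓ.1)
    (hv : v ∉ staircase n) :
    ∃ u ≠ ℓ, (pathGraph n □ pathGraph n).ForcesInOrder (rankOfLeakBelow ℓ) u v := by
  obtain ⟨⟨a, ha⟩, ⟨b, hb⟩⟩ := ℓ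
  obtain ⟨⟨i, hi⟩, ⟨j, hj⟩⟩ := v
  simp only [mem_staircase, Fin.le_def] at hv hℓ
  refine ⟨if h : i ≤ j then
      if i + j < n then (⟨i, hi⟩, ⟨j - 1, by omega⟩) else (⟨i - 1, by omega⟩, ⟨j, hj⟩)
    else if i - j = a - b + 1 ∧ i ≤ a then (⟨i - 1, by omega⟩, ⟨j, hj⟩)
    else (⟨i, hi⟩, ⟨j + 1, by omega⟩), ?_⟩
  split_ifs
  all_goals
    refine ⟨by simp only [ne_eq, Prod.ext_iff, Fin.ext_iff]; omega,
      by rw [boxProd_adj_iff]; dsimp only; omega,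
      by simp only [rankOfLeakBelow]; split_ifs <;> simp [Prod.Lex.toLex_lt_toLex] <;> omega, ?_⟩
    rintro ⟨⟨p, hp⟩, ⟨q, hq⟩⟩ hw hne
    simp only [boxProd_adj_iff, ne_eq, Prod.ext_iff, Fin.ext_iff] at hw hne
    simp only [rankOfLeakBelow]
    split_ifs <;> simp [Prod.Lex.toLex_lt_toLex] <;> omega

/-- The mirror image of `rankOfLeakBelow`: the cells on or below the superdiagonal come first;
then the upper diagonals in turn, each forced from the left starting at its top end, except that on
the diagonal just above the leak the cells from the leak's row down are forced from below starting
at its bottom end. -/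
def rankOfLeakAbove (ℓ v : Fin n × Fin n) : ℕ ×ₗ ℕ ×ₗ ℕ :=
  let i := v.1.val
  let j := v.2.val
  if j ≤ i + 1 then
    if i + j < n then toLex (0, toLex (i + 1 - j, j)) else toLex (1, toLex (i + j, j))
  else if j - i = ℓ.2.val - ℓ.1.val + 1 ∧ ℓ.1.val ≤ i then toLex (2, toLex (j - i, n - i))
  else toLex (2, toLex (j - i, i))

theorem exists_forcer_of_leak_above {ℓ v : Fin n × Fin n} (hℓ : ℓ.1 < ℓ.2)
    (hv : v ∉ staircase n) :
    ∃ u ≠ ℓ, (pathGraph n □ pathGraph n).ForcesInOrder (rankOfLeakAbove ℓ) u v := by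
  obtain ⟨⟨a, ha⟩, ⟨b, hb⟩⟩ := ℓ
  obtain ⟨⟨i, hi⟩, ⟨j, hj⟩⟩ := v
  simp only [mem_staircase, Fin.lt_def] at hv hℓ
  refine ⟨if h : j ≤ i + 1 then
      if i + j < n then (⟨i - 1, by omega⟩, ⟨j, hj⟩) else (⟨i, hi⟩, ⟨j - 1, by omega⟩)
    else if j - i = b - a + 1 ∧ a ≤ i then (⟨i + 1, by omega⟩, ⟨j, hj⟩)
    else (⟨i, hi⟩, ⟨j - 1, by omega⟩), ?_⟩
  split_ifs
  all_goals
    refine ⟨by simp only [ne_eq, Prod.ext_iff, Fin.ext_iff]; omega,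
      by rw [boxProd_adj_iff]; dsimp only; omega,
      by simp only [rankOfLeakAbove]; split_ifs <;> simp [Prod.Lex.toLex_lt_toLex] <;> omega, ?_⟩
    rintro ⟨⟨p, hp⟩, ⟨q, hq⟩⟩ hw hne
    simp only [boxProd_adj_iff, ne_eq, Prod.ext_iff, Fin.ext_iff] at hw hne
    simp only [rankOfLeakAbove]
    split_ifs <;> simp [Prod.Lex.toLex_lt_toLex] <;> omega

theorem isLeakyForcingSet_staircase (n : ℕ) :
    (pathGraph n □ pathGraph n).IsLeakyForcingSet 1 ↑(staircase n) := by
  intro L hL v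
  have : Nonempty (Fin n × Fin n) := ⟨v⟩
  obtain ⟨ℓ, hLℓ⟩ := Finset.card_le_one_iff_subset_singleton.1 hL
  have hnotMem : ∀ u, u ≠ ℓ → u ∉ (L : Set (Fin n × Fin n)) :=
    fun u huℓ huL => huℓ (Finset.mem_singleton.1 (hLℓ huL))
  rcases le_or_gt ℓ.2 ℓ.1 with hℓ | hℓ
  · refine leakyForces_of_forcesInOrder (rankOfLeakBelow ℓ) (fun v hv => ?_) v
    obtain ⟨u, huℓ, hu⟩ := exists_forcer_of_leak_below hℓ hv
    exact ⟨u, hnotMem u huℓ, hu⟩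
  · refine leakyForces_of_forcesInOrder (rankOfLeakAbove ℓ) (fun v hv => ?_) v
    obtain ⟨u, huℓ, hu⟩ := exists_forcer_of_leak_above hℓ hv
    exact ⟨u, hnotMem u huℓ, hu⟩

theorem val_le_add_length {u v : Fin n} (p : (pathGraph n).Walk u v) :
    v.val ≤ u.val + p.length := by
  induction p with
  | nil => simp
  | cons h _ ih =>
    have := pathGraph_adj.1 h
    simp only [Walk.length_cons]
    omega

theorem exists_walk_length_eq (k : ℕ) (hk : k < n + 1) :
    ∃ p : (pathGraph (n + 1)).Walk 0 ⟨k, hk⟩, p.length = k := by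
  induction k with
  | zero => exact ⟨Walk.nil, rfl⟩
  | succ k ih =>
    obtain ⟨p, hp⟩ := ih (by omega)
    exact ⟨p.concat (pathGraph_adj.2 (Or.inl rfl)), by simp [hp]⟩

theorem adjMatrix_pow_apply_zero_eq_zero {k : ℕ} {j : Fin (n + 1)} (hkj : k < j.val) :
    ((pathGraph (n + 1)).adjMatrix ℝ ^ k) 0 j = 0 := by
  rw [adjMatrix_pow_apply_eq_card_walk, Nat.cast_eq_zero, Fintype.card_eq_zero_iff]
  refine ⟨fun ⟨p, hp⟩ => ?_⟩
  have := val_le_add_length p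
  rw [Fin.val_zero, zero_add, hp] at this
  omega

theorem adjMatrix_pow_apply_zero_self_ne_zero (k : Fin (n + 1)) :
    ((pathGraph (n + 1)).adjMatrix ℝ ^ k.val) 0 k ≠ 0 := by
  rw [adjMatrix_pow_apply_eq_card_walk, Nat.cast_ne_zero, ← Nat.pos_iff_ne_zero,
    Fintype.card_pos_iff]
  obtain ⟨p, hp⟩ := exists_walk_length_eq k.val k.isLt
  exact ⟨⟨p, hp⟩⟩

noncomputable def commutatorMatrix (n : ℕ) : Matrix (Fin n × Fin n) (Fin n × Fin n) ℝ :=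
  (pathGraph n).adjMatrix ℝ ⊗ₖ 1 - 1 ⊗ₖ (pathGraph n).adjMatrix ℝ

theorem commutatorMatrix_ne_zero_iff {u v : Fin n × Fin n} (huv : u ≠ v) :
    commutatorMatrix n u v ≠ 0 ↔ (pathGraph n □ pathGraph n).Adj u v := by
  by_cases h1 : u.1 = v.1 <;> by_cases h2 : u.2 = v.2
  · exact absurd (Prod.ext h1 h2) huv
  all_goals simp [commutatorMatrix, Matrix.one_apply, boxProd_adj, h1, h2]

theorem commutatorMatrix_mulVec_vec (X : Matrix (Fin n) (Fin n) ℝ) :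
    commutatorMatrix n *ᵥ X.vec =
      (X * (pathGraph n).adjMatrix ℝ - (pathGraph n).adjMatrix ℝ * X).vec := by
  rw [commutatorMatrix, sub_mulVec, kronecker_mulVec_vec, kronecker_mulVec_vec, transpose_adjMatrix,
    transpose_one, Matrix.one_mul, Matrix.mul_one, vec_sub]

/-- The powers `B ^ k`, `k < n`, are independent because their rows at `0` are triangular. -/
theorem le_finrank_ker_commutatorMatrix :
    n ≤ Module.finrank ℝ (LinearMap.ker (commutatorMatrix n).mulVecLin) := by
  obtain _ | n := n
  · exact Nat.zero_le _
  let B := (pathGraph (n + 1)).adjMatrix ℝ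
  let rows : Matrix (Fin (n + 1)) (Fin (n + 1)) ℝ := Matrix.of fun k j => (B ^ k.val) 0 j
  have hrows : rows.det ≠ 0 := by
    rw [det_of_isLowerTriangular rows fun k j hkj => adjMatrix_pow_apply_zero_eq_zero hkj]
    exact Finset.prod_ne_zero_iff.2 fun k _ => adjMatrix_pow_apply_zero_self_ne_zero k
  have hind : LinearIndependent ℝ fun k : Fin (n + 1) => (B ^ k.val).vec :=
    .of_comp (LinearMap.funLeft ℝ ℝ fun j => (j, 0)) (linearIndependent_rows_of_det_ne_zero hrows)
  have hker : Submodule.span ℝ (Set.range fun k : Fin (n + 1) => (B ^ k.val).vec) ≤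
      LinearMap.ker (commutatorMatrix (n + 1)).mulVecLin := by
    rw [Submodule.span_le]
    rintro _ ⟨k, rfl⟩
    simp [commutatorMatrix_mulVec_vec, B, pow_mul_comm']
  simpa [finrank_span_eq_card hind] using Submodule.finrank_mono hker

end SimpleGraph.pathGraph

theorem square_grid_one_forcing_general (n : ℕ) :
    (SimpleGraph.pathGraph n □ SimpleGraph.pathGraph n).leakyForcingNumber 1 = n := by
  have hstaircase : ∃ S : Finset (Fin n × Fin n), S.card = n ∧
      (pathGraph n □ pathGraph n).IsLeakyForcingSet 1 ↑S :=
    ⟨pathGraph.staircase n, pathGraph.card_staircase n, pathGraph.isLeakyForcingSet_staircase n⟩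
  refine le_antisymm (Nat.sInf_le hstaircase) (le_csInf ⟨n, hstaircase⟩ ?_)
  rintro k ⟨S, rfl, hS⟩
  calc n ≤ Module.finrank ℝ (LinearMap.ker (pathGraph.commutatorMatrix n).mulVecLin) :=
        pathGraph.le_finrank_ker_commutatorMatrix
    _ ≤ S.card :=
        finrank_ker_mulVecLin_le_card (fun _ _ => pathGraph.commutatorMatrix_ne_zero_iff)
          (hS ∅ (by simp))

theorem square_grid_one_forcing (n : ℕ) (hn : 1 ≤ n) :
    (SimpleGraph.pathGraph n □ SimpleGraph.pathGraph n).leakyForcingNumber 1 = n :=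
  square_grid_one_forcing_general n
end
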